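/- arXiv:2501.04999 — 11 statements merged into one kernel-verified Lean document; each statement's English description precedes it below -/
import Mathlib

section
/- Let p be a prime, q = p^s, n a positive integer, and r a positive integer with r | q^n − 1. Then for any θ ∈ F_{q^n}^* and t ∈ F_q, the rational function θx^r + t x^{−r} over F_{q^n} cannot be written as h(x)^p − h(x) + c for any rational function h ∈ F_{q^n}(x) and constant c ∈ F_{q^n}. -/
/-!
Look at the place at infinity of `F(x)`. The left-hand side has a pole of order exactly `r` there,
coming from `θ x^r`. On the right, if `h` has no pole at infinity then neither has
`h^p - h + c`; otherwise `h^p` dominates, and the pole has order `p · ord h`. As `r ∣ q^n - 1`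
is prime to `p`, the orders cannot agree.
-/

open WithZero

namespace Valuation

variable {R Γ₀ : Type*} [Ring R] [LinearOrderedCommGroupWithZero Γ₀] (v : Valuation R Γ₀)

theorem map_pow_sub_self_add_eq_of_one_lt {p : ℕ} (hp : 1 < p) {h c : R} (hc : v c ≤ 1)
    (hlt : 1 < v (h ^ p - h + c)) : v (h ^ p - h + c) = v h ^ p := by
  rcases le_or_gt (v h) 1 with hh | hh
  · have : v (h ^ p - h + c) ≤ 1 :=
      v.map_add_le (v.map_sub_le (by rw [map_pow]; exact pow_le_one₀ zero_le hh) hh) hc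
    exact absurd hlt this.not_gt
  have hsmall : v (-h + c) < v (h ^ p) := by
    rw [map_pow]
    calc v (-h + c) ≤ v h := v.map_add_le (by rw [map_neg]) (hc.trans hh.le)
      _ < v h ^ p := lt_self_pow₀ hh hp
  rw [show h ^ p - h + c = h ^ p + (-h + c) by abel, v.map_add_eq_of_lt_left hsmall, map_pow]

end Valuation

namespace RatFunc

variable {K : Type*} [Field K] [DecidableEq (RatFunc K)]

theorem inftyValuation_C_le_one (c : K) : inftyValuation K (C c) ≤ 1 := by
  rcases eq_or_ne c 0 with rfl | hc
  · simp
  · rw [inftyValuation.C K hc]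

theorem inftyValuation_C_mul_X_pow_add_C_mul_X_inv_pow {θ : K} (hθ : θ ≠ 0) (t : K) {r : ℕ}
    (hr : 0 < r) :
    inftyValuation K (C θ * X ^ r + C t * X⁻¹ ^ r) = exp (r : ℤ) := by
  have hlead : inftyValuation K (C θ * X ^ r) = exp (r : ℤ) := by simp [hθ]
  have htail : inftyValuation K (C t * X⁻¹ ^ r) ≤ exp (-r : ℤ) := by
    simpa using inftyValuation_C_le_one t
  rw [(inftyValuation K).map_add_eq_of_lt_left
    (hlead ▸ htail.trans_lt (exp_lt_exp.mpr (by omega))), hlead]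

end RatFunc

theorem Nat.Prime.not_dvd_of_dvd_sub_one {p m r : ℕ} (hp : p.Prime) (hpm : p ∣ m) (hm : m ≠ 0)
    (hr : r ∣ m - 1) : ¬ p ∣ r := fun hpr ↦ by
  have := Nat.dvd_sub hpm (hpr.trans hr)
  rw [Nat.sub_sub_self (Nat.one_le_iff_ne_zero.mpr hm)] at this
  exact hp.not_dvd_one this

open RatFunc in
theorem stmt_2_general (p s q n r : ℕ) (hp : p.Prime) (hs : 0 < s) (hq : q = p ^ s)
    (hn : 0 < n) (hr : 0 < r) (hrdvd : r ∣ q ^ n - 1)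
    (Fq F : Type) [Field Fq] [Field F] [Algebra Fq F]
    (θ : F) (hθ : θ ≠ 0) (t : Fq) :
    ∀ (h : RatFunc F) (c : F),
      RatFunc.C θ * RatFunc.X ^ r +
          RatFunc.C (algebraMap Fq F t) * (RatFunc.X)⁻¹ ^ r ≠
        h ^ p - h + RatFunc.C c := by
  classical
  intro h c heq
  have hpr : ¬ p ∣ r := hp.not_dvd_of_dvd_sub_one
    (hq ▸ dvd_pow (dvd_pow_self p hs.ne') hn.ne') (hq ▸ pow_ne_zero _ (pow_ne_zero _ hp.ne_zero)) hrdvd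
  have hval := congrArg (inftyValuation F) heq
  rw [inftyValuation_C_mul_X_pow_add_C_mul_X_inv_pow hθ _ hr] at hval
  have hpole : 1 < exp (r : ℤ) := by simpa using exp_lt_exp.mpr (Int.natCast_pos.mpr hr)
  have hpow : exp (r : ℤ) = inftyValuation F h ^ p :=
    hval.trans <| (inftyValuation F).map_pow_sub_self_add_eq_of_one_lt hp.one_lt
      (inftyValuation_C_le_one c) (hval ▸ hpole)
  exact hpr <| Int.natCast_dvd_natCast.mp
    ⟨log (inftyValuation F h), by rw [← log_exp (r : ℤ), hpow, log_pow, nsmul_eq_mul]⟩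

/-- For `θ ∈ F_{q^n}^*` and `t ∈ F_q`, the rational function
`θx^r + t x^{-r}` over `F_{q^n}` is not of the form `h(x)^p - h(x) + c`. -/
theorem stmt_2 (p s q n r : ℕ) (hp : p.Prime) (hs : 0 < s) (hq : q = p ^ s)
    (hn : 0 < n) (hr : 0 < r) (hrdvd : r ∣ q ^ n - 1)
    (Fq F : Type) [Field Fq] [Field F] [Fintype Fq] [Fintype F] [Algebra Fq F]
    (hcardq : Fintype.card Fq = q) (hcardF : Fintype.card F = q ^ n)
    (θ : F) (hθ : θ ≠ 0) (t : Fq) :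
    ∀ (h : RatFunc F) (c : F),
      RatFunc.C θ * RatFunc.X ^ r +
          RatFunc.C (algebraMap Fq F t) * (RatFunc.X)⁻¹ ^ r ≠
        h ^ p - h + RatFunc.C c :=
  stmt_2_general p s q n r hp hs hq hn hr hrdvd Fq F θ hθ t
end

section
/- Let p be a prime, q = p^s, n a positive integer, and r a positive integer with r | q^n − 1. Then for any t ∈ F_q^*, the rational function t x^{−r} over F_{q^n} cannot be written as h(x)^p − h(x) + c for any rational function h ∈ F_{q^n}(x) and constant c ∈ F_{q^n}. -/
open Polynomial

lemma rootMult_pow {F : Type} [Field F] (b : F[X]) (hb : b ≠ 0) (x : F) (k : ℕ) :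
    rootMultiplicity x (b ^ k) = k * rootMultiplicity x b := by
  induction k with
  | zero => simp [Polynomial.rootMultiplicity_eq_zero, Polynomial.IsRoot]
  | succ k ih =>
    rw [pow_succ, Polynomial.rootMultiplicity_mul (mul_ne_zero (pow_ne_zero _ hb) hb), ih]
    ring

/-- For `t ∈ F_q^*`, the rational function `t x^{-r}` over `F_{q^n}`
is not of the form `h(x)^p - h(x) + c`. -/
theorem stmt_3 (p s q n r : ℕ) (hp : p.Prime) (hs : 0 < s) (hq : q = p ^ s)
    (hn : 0 < n) (hr : 0 < r) (hrdvd : r ∣ q ^ n - 1)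
    (Fq F : Type) [Field Fq] [Field F] [Fintype Fq] [Fintype F] [Algebra Fq F]
    (hcardq : Fintype.card Fq = q) (hcardF : Fintype.card F = q ^ n)
    (t : Fq) (ht : t ≠ 0) :
    ∀ (h : RatFunc F) (c : F),
      RatFunc.C (algebraMap Fq F t) * (RatFunc.X)⁻¹ ^ r ≠
        h ^ p - h + RatFunc.C c := by
  intro h c hEq
  set t' : F := algebraMap Fq F t with ht'def
  have ht' : t' ≠ 0 := by
    simpa [ht'def] using (map_ne_zero_iff _ (algebraMap Fq F).injective).mpr ht
  set a : F[X] := h.num with ha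
  set b : F[X] := h.denom with hb
  have hb0 : b ≠ 0 := h.denom_ne_zero
  have hbR : (algebraMap F[X] (RatFunc F)) b ≠ 0 := by
    simpa using (map_ne_zero_iff _ (RatFunc.algebraMap_injective F)).mpr hb0
  have hXR : (RatFunc.X : RatFunc F) ≠ 0 := RatFunc.X_ne_zero
  -- polynomial identity
  have key : Polynomial.C t' * b ^ p
      = Polynomial.X ^ r * (a ^ p - a * b ^ (p - 1) + Polynomial.C c * b ^ p) := by
    apply RatFunc.algebraMap_injective F
    have hh : h = algebraMap F[X] (RatFunc F) a / algebraMap F[X] (RatFunc F) b :=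
      (RatFunc.num_div_denom h).symm
    obtain ⟨m, rfl⟩ : ∃ m, p = m + 2 := ⟨p - 2, by have := hp.two_le; omega⟩
    have hm1 : m + 2 - 1 = m + 1 := rfl
    rw [hh] at hEq
    simp only [map_mul, map_pow, map_add, map_sub, RatFunc.algebraMap_C,
      RatFunc.algebraMap_X, hm1]
    rw [div_pow, inv_pow] at hEq
    field_simp at hEq
    refine mul_left_cancel₀ hbR ?_
    linear_combination hEq
  -- compare rootMultiplicity at 0
  have hlhs0 : Polynomial.C t' * b ^ p ≠ 0 :=
    mul_ne_zero (by simpa using ht') (pow_ne_zero _ hb0)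
  have hmulL : rootMultiplicity (0 : F) (Polynomial.C t' * b ^ p)
      = p * rootMultiplicity 0 b := by
    rw [Polynomial.rootMultiplicity_mul hlhs0,
      Polynomial.rootMultiplicity_eq_zero (Polynomial.not_isRoot_C _ _ ht'),
      rootMult_pow b hb0, zero_add]
  have hX0 : rootMultiplicity (0 : F) (Polynomial.X ^ r) = r := by
    have := Polynomial.rootMultiplicity_X_sub_C_pow (R := F) 0 r
    simpa using this
  have hmulR : rootMultiplicity (0 : F)
      (Polynomial.X ^ r * (a ^ p - a * b ^ (p - 1) + Polynomial.C c * b ^ p))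
      = r + rootMultiplicity 0 (a ^ p - a * b ^ (p - 1) + Polynomial.C c * b ^ p) := by
    rw [Polynomial.rootMultiplicity_mul (key ▸ hlhs0), hX0]
  have h1 : p * rootMultiplicity 0 b
      = r + rootMultiplicity 0 (a ^ p - a * b ^ (p - 1) + Polynomial.C c * b ^ p) := by
    rw [← hmulL, key, hmulR]
  by_cases hroot : b.IsRoot 0
  · have ha0 : a.eval 0 ≠ 0 := by
      intro ha0
      obtain ⟨u, v, huv⟩ := h.isCoprime_num_denom
      have := congrArg (Polynomial.eval 0) huv
      simp only [Polynomial.IsRoot] at hroot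
      simp [← ha, ← hb, ha0, hroot] at this
    have hp2 : 2 ≤ p := hp.two_le
    have hbr_eval : (a ^ p - a * b ^ (p - 1) + Polynomial.C c * b ^ p).eval 0 ≠ 0 := by
      have hb00 : b.eval 0 = 0 := hroot
      simp [Polynomial.eval_pow, hb00, zero_pow (by omega : p ≠ 0),
        zero_pow (by omega : p - 1 ≠ 0), pow_ne_zero, ha0]
    have hbrM : rootMultiplicity (0 : F)
        (a ^ p - a * b ^ (p - 1) + Polynomial.C c * b ^ p) = 0 :=
      Polynomial.rootMultiplicity_eq_zero hbr_eval
    have heqm : p * rootMultiplicity 0 b = r := by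
      rw [hbrM, add_zero] at h1; exact h1
    have hpdvdr : p ∣ r := ⟨_, heqm.symm⟩
    have hq0 : 0 < q := by rw [hq]; exact pow_pos hp.pos s
    have hqn1 : 1 ≤ q ^ n := Nat.one_le_pow _ _ hq0
    have hpq : p ∣ q ^ n := by
      rw [hq, ← pow_mul]
      exact dvd_pow_self p (Nat.mul_pos hs hn).ne'
    have hone : p ∣ 1 := by
      have h1 : p ∣ q ^ n - 1 := hpdvdr.trans hrdvd
      have := Nat.dvd_sub hpq h1
      simpa [Nat.sub_sub_self hqn1] using this
    exact Nat.Prime.one_lt hp |>.ne' (Nat.dvd_one.mp hone)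
  · have hbm : rootMultiplicity (0 : F) b = 0 := Polynomial.rootMultiplicity_eq_zero hroot
    rw [hbm, mul_zero] at h1
    omega
end

section
/- Let θ ∈ F_{q^n}^* and let r be a positive integer with r | q^n − 1 and p ∤ r (p the characteristic). Then there do not exist coprime h₁, h₂ ∈ F_{q^n}[x] with h₂ monic, t ∈ F_q^*, and c ∈ F_{q^n} such that (θx^{2r} + t)h₂^p = x^r(h₁^p − h₁h₂^{p−1} + c h₂^p). -/
open Polynomial

/-- the key algebraic step: if `h₁, h₂ ∈ F_{q^n}[x]` are coprime with `h₂`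
monic, `θ ∈ F_{q^n}^*`, `t ∈ F_q^*`, `p ∤ r`, and
`(θx^{2r} + t)h₂^p = x^r(h₁^p - h₁h₂^{p-1} + c h₂^p)`, then no such `h₁, h₂` exist
(the identity forces `h₂^p = x^r`, hence `p ∣ r`, a contradiction). -/
theorem stmt_4 (p s q n r : ℕ) (hp : p.Prime) (hs : 0 < s) (hq : q = p ^ s)
    (hn : 0 < n) (hr : 0 < r) (hrdvd : r ∣ q ^ n - 1) (hpr : ¬ p ∣ r)
    (Fq F : Type) [Field Fq] [Field F] [Fintype Fq] [Fintype F] [Algebra Fq F]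
    (hcardq : Fintype.card Fq = q) (hcardF : Fintype.card F = q ^ n)
    (θ : F) (hθ : θ ≠ 0) (t : Fq) (ht : t ≠ 0)
    (h₁ h₂ : Polynomial F) (hcop : IsCoprime h₁ h₂) (hmon : h₂.Monic) (c : F)
    (heq : (Polynomial.C θ * Polynomial.X ^ (2 * r) +
              Polynomial.C (algebraMap Fq F t)) * h₂ ^ p =
           Polynomial.X ^ r *
             (h₁ ^ p - h₁ * h₂ ^ (p - 1) + Polynomial.C c * h₂ ^ p)) :
    False := by
  set t' : F := algebraMap Fq F t with ht'
  have ht'ne : t' ≠ 0 := by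
    simpa [ht'] using (map_ne_zero_iff _ (algebraMap Fq F).injective).mpr ht
  set A : Polynomial F := h₁ ^ p - h₁ * h₂ ^ (p - 1) + C c * h₂ ^ p with hA
  have hp2 : 2 ≤ p := hp.two_le
  -- coprimality of h₂ with A
  have hcopA : IsCoprime h₂ A := by
    have h1 : IsCoprime h₂ (h₁ ^ p) := (hcop.symm).pow_right
    have this : A = h₁ ^ p + h₂ * (h₂ ^ (p - 2) * (C c * h₂ - h₁)) := by
      have e1 : h₂ ^ (p - 1) = h₂ ^ (p - 2) * h₂ := by
        rw [← pow_succ]; congr 1; omega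
      have e2 : h₂ ^ p = h₂ ^ (p - 2) * h₂ * h₂ := by
        rw [← pow_succ, ← pow_succ]; congr 1; omega
      rw [hA, e1, e2]; ring
    rw [this]
    exact h1.add_mul_left_right _
  have hcopA' : IsCoprime (h₂ ^ p) A := hcopA.pow_left
  have hdvd1 : h₂ ^ p ∣ X ^ r := by
    refine hcopA'.dvd_of_dvd_mul_right ?_
    exact ⟨C θ * X ^ (2 * r) + C t', by rw [← heq]; ring⟩
  -- coprimality of X with θX^{2r} + t
  have hXcop : IsCoprime (X : Polynomial F) (C θ * X ^ (2 * r) + C t') := by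
    rw [Polynomial.irreducible_X.coprime_iff_not_dvd, Polynomial.X_dvd_iff]
    simp [ht'ne, hr.ne']
  have hdvd2 : (X : Polynomial F) ^ r ∣ h₂ ^ p := by
    exact (hXcop.pow_left).dvd_of_dvd_mul_left ⟨A, heq⟩
  have h₂ne : h₂ ≠ 0 := hmon.ne_zero
  have hdeg1 : (h₂ ^ p).natDegree ≤ r := by
    simpa using Polynomial.natDegree_le_of_dvd hdvd1 (pow_ne_zero r Polynomial.X_ne_zero)
  have hdeg2 : r ≤ (h₂ ^ p).natDegree := by
    simpa using Polynomial.natDegree_le_of_dvd hdvd2 (pow_ne_zero p h₂ne)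
  have : p * h₂.natDegree = r := by
    have := le_antisymm hdeg1 hdeg2
    rwa [Polynomial.natDegree_pow] at this
  exact hpr ⟨_, this.symm⟩
end

section
/- Let q be a prime power, m a positive integer, e | q^m − 1, δ = gcd(e, q−1), and let Q_e be the largest divisor of e coprime to δ. Then ξ ∈ F_{q^m}^* is e-free if and only if ξ is Q_e-free and N_{F_{q^m}/F_q}(ξ) is δ-free in F_q^*. -/
/-- The norm of a finite field extension is the `(q^m-1)/(q-1)`-th power map. -/
lemma norm_pow_formula (p s q m : ℕ) (hp : p.Prime) (hs : 0 < s) (hq : q = p ^ s)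
    (hm : 0 < m)
    (Fq F : Type) [Field Fq] [Field F] [Fintype Fq] [Fintype F] [Algebra Fq F]
    (hcardq : Fintype.card Fq = q) (hcardF : Fintype.card F = q ^ m) (ξ : F) :
    algebraMap Fq F (Algebra.norm Fq ξ) = ξ ^ ((q ^ m - 1) / (q - 1)) := by
  haveI := Fact.mk hp
  have hq2 : 2 ≤ q := by
    rw [hq]
    exact le_trans hp.two_le (Nat.le_self_pow hs.ne' p)
  haveI hchFq : CharP Fq p := by
    obtain ⟨n, hr, hqn⟩ := FiniteField.card Fq (ringChar Fq)
    have hpr : p = ringChar Fq := by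
      have h1 : p ^ s = ringChar Fq ^ (n : ℕ) := by rw [← hq, ← hcardq, hqn]
      have hd : p ∣ ringChar Fq ^ (n : ℕ) := h1 ▸ dvd_pow_self p hs.ne'
      exact ((Nat.prime_dvd_prime_iff_eq hp hr).mp (hp.dvd_of_dvd_pow hd))
    rw [hpr]; infer_instance
  haveI : CharP F p := charP_of_injective_algebraMap' Fq (A := F) p
  have halg : ∀ a : Fq, (algebraMap Fq F a) ^ q = algebraMap Fq F a := by
    intro a
    rw [← map_pow]
    congr 1
    rw [← hcardq]
    exact FiniteField.pow_card a
  let ψ : F →ₐ[Fq] F :=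
    { toRingHom := iterateFrobenius F p s
      commutes' := fun a => by
        show iterateFrobenius F p s _ = _
        rw [iterateFrobenius_def, ← hq, halg a] }
  have hψ : ∀ x : F, ψ x = x ^ q := fun x => by
    show iterateFrobenius F p s x = x ^ q
    rw [iterateFrobenius_def, hq]
  have hψinj : Function.Injective ψ := ψ.toRingHom.injective
  let φ : F ≃ₐ[Fq] F := AlgEquiv.ofBijective ψ (Finite.injective_iff_bijective.mp hψinj)
  have hφ : ∀ x : F, φ x = x ^ q := hψ
  have hφpow : ∀ (i : ℕ) (x : F), (φ ^ i) x = x ^ q ^ i := by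
    intro i
    induction i with
    | zero => intro x; simp
    | succ n ih =>
      intro x
      rw [pow_succ, AlgEquiv.mul_apply, hφ, ih, ← pow_mul, ← pow_succ']
  -- finrank
  have hfr : Module.finrank Fq F = m := by
    have h1 : Fintype.card F = Fintype.card Fq ^ Module.finrank Fq F := Module.card_eq_pow_finrank
    rw [hcardq, hcardF] at h1
    exact (Nat.pow_right_injective hq2 h1.symm)
  have hcardaut : Fintype.card (F ≃ₐ[Fq] F) = m := by
    rw [← Nat.card_eq_fintype_card, IsGalois.card_aut_eq_finrank, hfr]
  -- generator of Fˣ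
  haveI := Classical.decEq F
  obtain ⟨ζ, hζ⟩ := IsCyclic.exists_generator (α := Fˣ)
  have hordζ : orderOf ζ = q ^ m - 1 := by
    rw [orderOf_eq_card_of_forall_mem_zpowers hζ, Nat.card_eq_fintype_card,
      Fintype.card_units, hcardF]
  have hNpos : 0 < q ^ m - 1 := by
    have : 2 ≤ q ^ m := le_trans hq2 (Nat.le_self_pow hm.ne' q)
    omega
  -- injectivity of powers of φ
  have hinj : ∀ i j : ℕ, i < m → j < m → i ≤ j → φ ^ i = φ ^ j → i = j := by
    intro i j him hjm hij hphi
    by_contra hne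
    have hlt : i < j := lt_of_le_of_ne hij hne
    have h1 : ((ζ : F)) ^ q ^ i = ((ζ : F)) ^ q ^ j := by
      rw [← hφpow, ← hφpow, hphi]
    have hzu : ζ ^ q ^ i = ζ ^ q ^ j := by
      ext
      push_cast
      exact h1
    have hle : q ^ i ≤ q ^ j := Nat.pow_le_pow_right (by omega) hij
    have h2 : ζ ^ (q ^ j - q ^ i) = 1 := by
      have h3 : ζ ^ q ^ i * ζ ^ (q ^ j - q ^ i) = ζ ^ q ^ i * 1 := by
        rw [mul_one, ← pow_add, Nat.add_sub_cancel' hle, hzu]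
      exact mul_left_cancel h3
    have hdvd : q ^ m - 1 ∣ q ^ j - q ^ i := hordζ ▸ orderOf_dvd_of_pow_eq_one h2
    have hpos : 0 < q ^ j - q ^ i := by
      have : q ^ i < q ^ j := Nat.pow_lt_pow_right (by omega) hlt
      omega
    have hlt2 : q ^ j - q ^ i < q ^ m - 1 := by
      have hqj : q ^ j < q ^ m := Nat.pow_lt_pow_right (by omega) hjm
      have hqi : 1 ≤ q ^ i := Nat.one_le_pow _ _ (by omega)
      omega
    exact absurd (Nat.le_of_dvd hpos hdvd) (not_le.mpr hlt2)
  have hbij : Function.Bijective (fun i : Fin m => φ ^ (i : ℕ)) := by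
    rw [Fintype.bijective_iff_injective_and_card]
    constructor
    · intro i j hijeq
      rcases le_total (i : ℕ) (j : ℕ) with h | h
      · exact Fin.ext (hinj i j i.isLt j.isLt h hijeq)
      · exact (Fin.ext (hinj j i j.isLt i.isLt h hijeq.symm)).symm
    · simp [hcardaut]
  -- geometric sum
  have hsum' : (∑ i ∈ Finset.range m, q ^ i) * (q - 1) = q ^ m - 1 := by
    have hgeo := geom_sum_mul (q : ℤ) m
    have h1 : (1 : ℕ) ≤ q := by omega
    have h2 : (1 : ℕ) ≤ q ^ m := Nat.one_le_pow _ _ (by omega)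
    zify [h1, h2]
    exact_mod_cast hgeo
  have hsum : (∑ i : Fin m, q ^ (i : ℕ)) * (q - 1) = q ^ m - 1 := by
    rw [Fin.sum_univ_eq_sum_range (fun i => q ^ i) m]
    exact hsum'
  have hdivsum : (q ^ m - 1) / (q - 1) = ∑ i : Fin m, q ^ (i : ℕ) :=
    Nat.div_eq_of_eq_mul_left (by omega) hsum.symm
  calc algebraMap Fq F (Algebra.norm Fq ξ) = ∏ σ : F ≃ₐ[Fq] F, σ ξ :=
        Algebra.norm_eq_prod_automorphisms Fq ξ
    _ = ∏ i : Fin m, (φ ^ (i : ℕ)) ξ :=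
        (Fintype.prod_bijective _ hbij (fun i => (φ ^ (i : ℕ)) ξ) (fun σ => σ ξ)
          (fun i => rfl)).symm
    _ = ∏ i : Fin m, ξ ^ q ^ (i : ℕ) := by
        apply Finset.prod_congr rfl
        intro i _
        exact hφpow i ξ
    _ = ξ ^ (∑ i : Fin m, q ^ (i : ℕ)) := Finset.prod_pow_eq_pow_sum _ _ _
    _ = ξ ^ ((q ^ m - 1) / (q - 1)) := by rw [hdivsum]

/-- with `δ = gcd(e, q-1)` and `Qe` the largest divisor of `e` coprime to
`δ`: `ξ ∈ F_{q^m}^*` is `e`-free iff `ξ` is `Qe`-free and `N(ξ)` is `δ`-free in `F_q^*`. -/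
theorem stmt_7 (p s q m e Qe : ℕ) (hp : p.Prime) (hs : 0 < s) (hq : q = p ^ s)
    (hm : 0 < m) (he : e ∣ q ^ m - 1) (hepos : 0 < e)
    (hQe₁ : Qe ∣ e) (hQe₂ : Nat.gcd Qe (Nat.gcd e (q - 1)) = 1)
    (hQe₃ : ∀ d : ℕ, d ∣ e → Nat.gcd d (Nat.gcd e (q - 1)) = 1 → d ∣ Qe)
    (Fq F : Type) [Field Fq] [Field F] [Fintype Fq] [Fintype F] [Algebra Fq F]
    (hcardq : Fintype.card Fq = q) (hcardF : Fintype.card F = q ^ m)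
    (ξ : F) (hξ : ξ ≠ 0) :
    Nat.gcd e ((q ^ m - 1) / orderOf ξ) = 1 ↔
      Nat.gcd Qe ((q ^ m - 1) / orderOf ξ) = 1 ∧
      Nat.gcd (Nat.gcd e (q - 1)) ((q - 1) / orderOf (Algebra.norm Fq ξ)) = 1 := by
  have hq2 : 2 ≤ q := by
    rw [hq]
    exact le_trans hp.two_le (Nat.le_self_pow hs.ne' p)
  have hNpos : 0 < q ^ m - 1 := by
    have : 2 ≤ q ^ m := le_trans hq2 (Nat.le_self_pow hm.ne' q)
    omega
  set N := q ^ m - 1 with hN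
  set n := orderOf ξ with hn
  set k := N / n with hk
  have hξN : ξ ^ N = 1 := by
    have := FiniteField.pow_card_sub_one_eq_one ξ hξ
    rwa [hcardF] at this
  have hnN : n ∣ N := orderOf_dvd_of_pow_eq_one hξN
  have hnpos : 0 < n := by
    rcases Nat.eq_zero_or_pos n with h | h
    · rw [h] at hnN; omega
    · exact h
  have hNnk : N = n * k := (Nat.mul_div_cancel' hnN).symm
  have hq1N : (q - 1) ∣ N := by
    have := Nat.sub_dvd_pow_sub_pow q 1 m
    simpa using this
  set c := N / (q - 1) with hc
  have hcq : c * (q - 1) = N := Nat.div_mul_cancel hq1N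
  have hcpos : c ≠ 0 := by
    intro h
    rw [h, zero_mul] at hcq
    omega
  have hnorm : algebraMap Fq F (Algebra.norm Fq ξ) = ξ ^ c :=
    norm_pow_formula p s q m hp hs hq hm Fq F hcardq hcardF ξ
  have hordnorm : orderOf (Algebra.norm Fq ξ) = n / Nat.gcd n c := by
    rw [← orderOf_injective (algebraMap Fq F).toMonoidHom (algebraMap Fq F).injective,
      RingHom.toMonoidHom_eq_coe, MonoidHom.coe_coe, hnorm, orderOf_pow' ξ hcpos]
  set g := Nat.gcd n c with hg
  have hgpos : 0 < g := Nat.gcd_pos_of_pos_left _ hnpos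
  have hgn : g ∣ n := Nat.gcd_dvd_left _ _
  have key : g * (q - 1) = n * Nat.gcd (q - 1) k := by
    calc g * (q - 1) = Nat.gcd (n * (q - 1)) (c * (q - 1)) := (Nat.gcd_mul_right _ _ _).symm
      _ = Nat.gcd (n * (q - 1)) (n * k) := by rw [hcq, hNnk]
      _ = n * Nat.gcd (q - 1) k := Nat.gcd_mul_left _ _ _
  have hq1eq : q - 1 = (n / g) * Nat.gcd (q - 1) k := by
    apply Nat.eq_of_mul_eq_mul_left hgpos
    rw [key, ← mul_assoc, Nat.mul_div_cancel' hgn]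
  have hkey2 : (q - 1) / orderOf (Algebra.norm Fq ξ) = Nat.gcd (q - 1) k := by
    rw [hordnorm]
    have hng : 0 < n / g := Nat.div_pos (Nat.le_of_dvd hnpos hgn) hgpos
    conv_lhs => rw [hq1eq]
    rw [Nat.mul_div_cancel_left _ hng]
  rw [hkey2]
  have hδq1 : Nat.gcd e (q - 1) ∣ q - 1 := Nat.gcd_dvd_right e (q - 1)
  have hrw : Nat.gcd (Nat.gcd e (q - 1)) (Nat.gcd (q - 1) k) = Nat.gcd (Nat.gcd e (q - 1)) k := by
    rw [← Nat.gcd_assoc, Nat.gcd_eq_left hδq1]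
  rw [hrw]
  constructor
  · intro h
    exact ⟨Nat.Coprime.coprime_dvd_left hQe₁ h,
      Nat.Coprime.coprime_dvd_left (Nat.gcd_dvd_left e (q - 1)) h⟩
  · rintro ⟨h1, h2⟩
    by_contra hne
    obtain ⟨r, hr, hrd⟩ := Nat.exists_prime_and_dvd hne
    have hre : r ∣ e := hrd.trans (Nat.gcd_dvd_left e k)
    have hrk : r ∣ k := hrd.trans (Nat.gcd_dvd_right e k)
    by_cases hrδ : r ∣ Nat.gcd e (q - 1)
    · have : r ∣ Nat.gcd (Nat.gcd e (q - 1)) k := Nat.dvd_gcd hrδ hrk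
      rw [h2] at this
      exact hr.ne_one (Nat.dvd_one.mp this)
    · have hcop : Nat.gcd r (Nat.gcd e (q - 1)) = 1 := (hr.coprime_iff_not_dvd).mpr hrδ
      have hrQe : r ∣ Qe := hQe₃ r hre hcop
      have : r ∣ Nat.gcd Qe k := Nat.dvd_gcd hrQe hrk
      rw [h1] at this
      exact hr.ne_one (Nat.dvd_one.mp this)
end

section
/- Let g ∈ F_q[x] be a polynomial of degree k dividing x^m − 1, and let β ∈ F_{q^m} be a normal element over F_q. Then ξ = g ∘ β (the image of β under the linearized action of g) is a k-normal element of F_{q^m} over F_q. -/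
/-!
The Frobenius `σ : x ↦ x^q` is an `F_q`-linear endomorphism of `F_{q^m}` with `f ∘ ξ = f(σ) ξ`.
The conjugates of `g ∘ β` are the images under `g(σ)` of those of `β`, which span `F_{q^m}`, so
their span is the range of `g(σ)`, of dimension `m - dim ker g(σ)`. The kernel of `f(σ)` consists
of roots of the linearized associate `Σ aᵢ X^{qⁱ}` of `f`, hence has at most `q^{deg f}` elements,
i.e. dimension at most `deg f`. Applying this to `g` and to `h = (x^m - 1)/g`, the inclusion
`range h(σ) ⊆ ker g(σ)` (from `g(σ) h(σ) = σ^m - 1 = 0`) forces `dim ker g(σ) = deg g`.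
-/

/-- The linearized action of a polynomial `f = Σ aᵢ xⁱ` over `F_q` on `ξ ∈ F_{q^m}`:
`f ∘ ξ = Σ aᵢ ξ^{qⁱ}`. -/
noncomputable def polyAct {Fq F : Type} [Field Fq] [Field F] [Algebra Fq F]
    (q : ℕ) (f : Polynomial Fq) (ξ : F) : F :=
  f.sum fun i a => algebraMap Fq F a * ξ ^ q ^ i

open Polynomial Module

section LinearizedAssociate

variable {K L : Type} [Field K] [Field L] [Algebra K L]

variable (L) in
noncomputable def linearizedAssociate (q : ℕ) (f : K[X]) : L[X] :=
  f.sum fun i a => C (algebraMap K L a) * X ^ q ^ i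

theorem eval_linearizedAssociate (q : ℕ) (f : K[X]) (x : L) :
    (linearizedAssociate L q f).eval x = polyAct q f x := by
  simp [linearizedAssociate, polyAct, Polynomial.sum_def, eval_finsetSum]

theorem natDegree_linearizedAssociate_le {q : ℕ} (hq : 0 < q) (f : K[X]) :
    (linearizedAssociate L q f).natDegree ≤ q ^ f.natDegree :=
  natDegree_sum_le_of_forall_le _ _ fun i hi =>
    (natDegree_C_mul_X_pow_le _ _).trans (Nat.pow_le_pow_right hq (le_natDegree_of_mem_supp i hi))

theorem coeff_linearizedAssociate_pow {q : ℕ} (hq : 1 < q) (f : K[X]) (n : ℕ) :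
    (linearizedAssociate L q f).coeff (q ^ n) = algebraMap K L (f.coeff n) := by
  rw [linearizedAssociate, Polynomial.sum_def, finsetSum_coeff, Finset.sum_eq_single n]
  · simp
  · intro i _ hin
    simp [(Nat.pow_right_injective hq).ne hin.symm]
  · intro hn
    simp [notMem_support_iff.mp hn]

theorem linearizedAssociate_ne_zero {q : ℕ} (hq : 1 < q) {f : K[X]} (hf : f ≠ 0) :
    linearizedAssociate L q f ≠ 0 := by
  intro h
  have := coeff_linearizedAssociate_pow (L := L) hq f f.natDegree
  rw [h, coeff_zero, eq_comm, map_eq_zero_iff _ (algebraMap K L).injective] at this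
  exact hf (leadingCoeff_eq_zero.mp this)

end LinearizedAssociate

theorem LinearMap.finrank_ker_eq_of_comp_eq_zero {K U V W : Type*} [DivisionRing K]
    [AddCommGroup U] [Module K U] [FiniteDimensional K U] [AddCommGroup V] [Module K V]
    [FiniteDimensional K V] [AddCommGroup W] [Module K W]
    {A : V →ₗ[K] W} {B : U →ₗ[K] V} (hAB : A ∘ₗ B = 0)
    {a b : ℕ} (ha : finrank K (ker A) ≤ a) (hb : finrank K (ker B) ≤ b)
    (hab : a + b = finrank K U) : finrank K (ker A) = a := by
  have hrange := Submodule.finrank_mono (range_le_ker_iff.mpr hAB)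
  have := finrank_range_add_finrank_ker B
  omega

namespace FiniteField

variable (K L : Type) [Field K] [Fintype K] [Field L] [Algebra K L]

noncomputable abbrev frobeniusEnd : Module.End K L := (frobeniusAlgHom K L).toLinearMap

variable {K L}

theorem frobeniusEnd_pow_apply (n : ℕ) (x : L) :
    (frobeniusEnd K L ^ n) x = x ^ Fintype.card K ^ n := by
  rw [Module.End.pow_apply]
  exact congr_fun (pow_iterate _ n) x

theorem aeval_frobeniusEnd_apply (f : K[X]) (x : L) :
    aeval (frobeniusEnd K L) f x = polyAct (Fintype.card K) f x := by
  rw [aeval_def, eval₂_eq_sum, polyAct, Polynomial.sum_def, Polynomial.sum_def]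
  simp only [LinearMap.coe_sum, Finset.sum_apply, Module.End.mul_apply,
    Module.algebraMap_end_apply, frobeniusEnd_pow_apply, Algebra.smul_def]

theorem frobeniusEnd_pow_aeval_apply (f : K[X]) (n : ℕ) (x : L) :
    (frobeniusEnd K L ^ n) (aeval (frobeniusEnd K L) f x) =
      aeval (frobeniusEnd K L) f ((frobeniusEnd K L ^ n) x) := by
  have := (Commute.all (X ^ n : K[X]) f).map (aeval (frobeniusEnd K L))
  rw [map_pow, aeval_X] at this
  exact LinearMap.congr_fun this.eq x

theorem frobeniusEnd_pow_finrank [Fintype L] : frobeniusEnd K L ^ finrank K L = 1 := by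
  ext x
  rw [frobeniusEnd_pow_apply, ← Module.card_eq_pow_finrank, pow_card, Module.End.one_apply]

theorem finrank_ker_aeval_frobeniusEnd_le [Fintype L] {f : K[X]} (hf : f ≠ 0) :
    finrank K (LinearMap.ker (aeval (frobeniusEnd K L) f)) ≤ f.natDegree := by
  classical
  have hq : 1 < Fintype.card K := Fintype.one_lt_card
  set P := linearizedAssociate L (Fintype.card K) f
  have hroots : (LinearMap.ker (aeval (frobeniusEnd K L) f) : Set L).toFinset.val ⊆ P.roots := by
    intro x hx
    rw [Finset.mem_val, Set.mem_toFinset, SetLike.mem_coe, LinearMap.mem_ker,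
      aeval_frobeniusEnd_apply] at hx
    rw [mem_roots (linearizedAssociate_ne_zero hq hf), IsRoot, eval_linearizedAssociate, hx]
  have hcard : Fintype.card K ^ finrank K (LinearMap.ker (aeval (frobeniusEnd K L) f)) ≤
      Fintype.card K ^ f.natDegree := calc
    _ = Nat.card (LinearMap.ker (aeval (frobeniusEnd K L) f)) := by
      rw [Module.natCard_eq_pow_finrank (K := K), Nat.card_eq_fintype_card]
    _ = (LinearMap.ker (aeval (frobeniusEnd K L) f) : Set L).toFinset.card :=
      Nat.card_eq_card_toFinset _
    _ ≤ P.natDegree := card_le_degree_of_subset_roots hroots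
    _ ≤ _ := natDegree_linearizedAssociate_le (by omega) f
  exact (Nat.pow_le_pow_iff_right hq).mp hcard

theorem span_range_polyAct_pow (f : K[X]) (x : L) (m : ℕ) :
    Submodule.span K
        (Set.range fun i : Fin m => polyAct (Fintype.card K) f x ^ Fintype.card K ^ (i : ℕ)) =
      (Submodule.span K (Set.range fun i : Fin m => x ^ Fintype.card K ^ (i : ℕ))).map
        (aeval (frobeniusEnd K L) f) := by
  rw [Submodule.map_span, ← Set.range_comp]
  congr 2
  funext i
  simp only [Function.comp_apply, ← frobeniusEnd_pow_apply, ← aeval_frobeniusEnd_apply,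
    frobeniusEnd_pow_aeval_apply]

end FiniteField

open FiniteField

theorem stmt_8_general (q m k : ℕ)
    (Fq F : Type) [Field Fq] [Field F] [Fintype Fq] [Fintype F] [Algebra Fq F]
    (hcardq : Fintype.card Fq = q) (hcardF : Fintype.card F = q ^ m)
    (g : Polynomial Fq) (hgdeg : g.natDegree = k)
    (hgdvd : g ∣ Polynomial.X ^ m - 1)
    (β : F)
    (hβnormal : Module.finrank Fq
      ↥(Submodule.span Fq (Set.range fun i : Fin m => β ^ q ^ (i : ℕ))) = m) :
    Module.finrank Fq
      ↥(Submodule.span Fq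
        (Set.range fun i : Fin m => (polyAct q g β) ^ q ^ (i : ℕ))) = m - k := by
  subst hcardq
  obtain ⟨h, hgh⟩ := hgdvd
  have hdim : finrank Fq F = m :=
    Nat.pow_right_injective Fintype.one_lt_card (Module.card_eq_pow_finrank.symm.trans hcardF)
  have hXm : (X ^ m - 1 : Fq[X]) ≠ 0 := X_pow_sub_C_ne_zero (hdim ▸ finrank_pos) 1
  obtain ⟨hg, hh⟩ := mul_ne_zero_iff.mp (hgh ▸ hXm)
  have hdeg : k + h.natDegree = m := by
    rw [← hgdeg, ← natDegree_mul hg hh, ← hgh, ← C_1, natDegree_X_pow_sub_C]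
  have hgh_frob : aeval (frobeniusEnd Fq F) g ∘ₗ aeval (frobeniusEnd Fq F) h = 0 := by
    rw [← Module.End.mul_eq_comp, ← map_mul, ← hgh, map_sub, map_pow, aeval_X, map_one, ← hdim,
      frobeniusEnd_pow_finrank, sub_self]
  have hker : finrank Fq (LinearMap.ker (aeval (frobeniusEnd Fq F) g)) = k :=
    LinearMap.finrank_ker_eq_of_comp_eq_zero hgh_frob
      (hgdeg ▸ finrank_ker_aeval_frobeniusEnd_le hg) (finrank_ker_aeval_frobeniusEnd_le hh)
      (by omega)
  have hspan : Submodule.span Fq (Set.range fun i : Fin m => β ^ Fintype.card Fq ^ (i : ℕ)) = ⊤ :=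
    Submodule.eq_top_of_finrank_eq (hβnormal.trans hdim.symm)
  rw [span_range_polyAct_pow, hspan, Submodule.map_top, ← hdim,
    ← LinearMap.finrank_range_add_finrank_ker (aeval (frobeniusEnd Fq F) g), hker,
    Nat.add_sub_cancel]

/-- if `g ∈ F_q[x]` has degree `k` and divides `x^m - 1`, and
`β ∈ F_{q^m}` is normal over `F_q`, then `ξ = g ∘ β` is `k`-normal over `F_q`
(the span of its Frobenius conjugates has dimension `m - k`). -/
theorem stmt_8 (p s q m k : ℕ) (hp : p.Prime) (hs : 0 < s) (hq : q = p ^ s)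
    (hm : 0 < m)
    (Fq F : Type) [Field Fq] [Field F] [Fintype Fq] [Fintype F] [Algebra Fq F]
    (hcardq : Fintype.card Fq = q) (hcardF : Fintype.card F = q ^ m)
    (g : Polynomial Fq) (hgdeg : g.natDegree = k)
    (hgdvd : g ∣ Polynomial.X ^ m - 1)
    (β : F)
    (hβnormal : Module.finrank Fq
      ↥(Submodule.span Fq (Set.range fun i : Fin m => β ^ q ^ (i : ℕ))) = m) :
    Module.finrank Fq
      ↥(Submodule.span Fq
        (Set.range fun i : Fin m => (polyAct q g β) ^ q ^ (i : ℕ))) = m - k :=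
  stmt_8_general q m k Fq F hcardq hcardF g hgdeg hgdvd β hβnormal
end

section
/- Let q be a prime power with q > 5 and 3 | q² − 1. Then there is no 3-primitive element ξ ∈ F_{q²} with Tr_{F_{q²}/F_q}(ξ^{−1}) = 0. More precisely, if ξ ∈ F_{q²}^* satisfies Tr_{F_{q²}/F_q}(ξ^{−1}) = 0, then the multiplicative order of ξ is at most 2(q−1), which is strictly less than (q²−1)/3 for q > 5. -/
open Polynomial

/-- In a finite field of cardinality `q ^ 2` with `q > 1`, not every element satisfies
`x ^ q = x`. -/
lemma aux_exists_pow_ne (F : Type) [Field F] [Fintype F] (q : ℕ) (hq1 : 1 < q)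
    (hcardF : Fintype.card F = q ^ 2) : ∃ x : F, x ^ q ≠ x := by
  classical
  by_contra h
  push_neg at h
  have hfne : (X ^ q - X : F[X]) ≠ 0 := FiniteField.X_pow_card_sub_X_ne_zero F hq1
  have hdeg : (X ^ q - X : F[X]).natDegree = q := FiniteField.X_pow_card_sub_X_natDegree_eq F hq1
  have hsub : (Finset.univ : Finset F) ⊆ (X ^ q - X : F[X]).roots.toFinset := by
    intro x _
    simp only [Multiset.mem_toFinset, mem_roots hfne]
    simp [Polynomial.IsRoot.def, h x]
  have hcard : Fintype.card F ≤ q := by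
    calc Fintype.card F = (Finset.univ : Finset F).card := rfl
      _ ≤ (X ^ q - X : F[X]).roots.toFinset.card := Finset.card_le_card hsub
      _ ≤ Multiset.card (X ^ q - X : F[X]).roots := Multiset.toFinset_card_le _
      _ ≤ (X ^ q - X : F[X]).natDegree := Polynomial.card_roots' _
      _ = q := hdeg
  rw [hcardF] at hcard
  nlinarith

/-- for a prime power `q > 5` with `3 ∣ q² - 1`, any `ξ ∈ F_{q²}^*` with
`Tr_{F_{q²}/F_q}(ξ⁻¹) = 0` has order at most `2(q-1) < (q²-1)/3`; in particular there is
no `3`-primitive such `ξ`. -/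
theorem stmt_9 (p s q : ℕ) (hp : p.Prime) (hs : 0 < s) (hq : q = p ^ s)
    (hq5 : 5 < q) (h3 : 3 ∣ q ^ 2 - 1)
    (Fq F : Type) [Field Fq] [Field F] [Fintype Fq] [Fintype F] [Algebra Fq F]
    (hcardq : Fintype.card Fq = q) (hcardF : Fintype.card F = q ^ 2)
    (ξ : F) (hξ : ξ ≠ 0) (htr : Algebra.trace Fq F ξ⁻¹ = 0) :
    orderOf ξ ≤ 2 * (q - 1) ∧ 2 * (q - 1) < (q ^ 2 - 1) / 3 ∧
      orderOf ξ ≠ (q ^ 2 - 1) / 3 := by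
  classical
  have hq1 : 1 < q := by omega
  -- characteristic
  haveI hfact : Fact p.Prime := ⟨hp⟩
  have hchq : CharP Fq p := by
    obtain ⟨r, hr⟩ := CharP.exists Fq
    haveI := hr
    have hrprime : r.Prime := CharP.char_is_prime Fq r
    obtain ⟨n, hn⟩ := FiniteField.card Fq r
    have : r = p := by
      have hdvd : r ∣ p ^ s := by
        rw [← hq, ← hcardq, hn.2]
        exact dvd_pow_self r (PNat.pos n).ne'
      exact (Nat.prime_dvd_prime_iff_eq hrprime hp).mp (hrprime.dvd_of_dvd_pow hdvd)
    rwa [this] at hr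
  haveI := hchq
  haveI : CharP F p := charP_of_injective_algebraMap' Fq p
  haveI : FiniteDimensional Fq F := Module.Finite.of_finite
  -- the Frobenius automorphism x ↦ x ^ q
  have hpowq : ∀ x : F, iterateFrobenius F p s x = x ^ q := by
    intro x; rw [iterateFrobenius_def, hq]
  have hcomm : ∀ a : Fq, iterateFrobenius F p s (algebraMap Fq F a) = algebraMap Fq F a := by
    intro a
    rw [hpowq, ← map_pow]
    congr 1
    have := FiniteField.pow_card a
    rwa [hcardq] at this
  let φAlgHom : F →ₐ[Fq] F := { toRingHom := iterateFrobenius F p s, commutes' := hcomm }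
  have hbij : Function.Bijective φAlgHom :=
    (Finite.injective_iff_bijective).mp (iterateFrobenius F p s).injective
  let φ : F ≃ₐ[Fq] F := AlgEquiv.ofBijective φAlgHom hbij
  have hφ : ∀ x : F, φ x = x ^ q := hpowq
  -- φ ≠ 1
  have hφne : φ ≠ 1 := by
    obtain ⟨x, hx⟩ := aux_exists_pow_ne F q hq1 hcardF
    intro h
    apply hx
    have := congrArg (fun ψ : F ≃ₐ[Fq] F => ψ x) h
    simpa [hφ x] using this
  -- finrank = 2
  have hfinrank : Module.finrank Fq F = 2 := by
    have hcard := Module.card_eq_pow_finrank (K := Fq) (V := F)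
    rw [hcardq, hcardF] at hcard
    exact (Nat.pow_right_injective (by omega) hcard.symm)
  -- Galois group has two elements
  have hcardG : Fintype.card (F ≃ₐ[Fq] F) = 2 := by
    rw [← Nat.card_eq_fintype_card, IsGalois.card_aut_eq_finrank, hfinrank]
  have huniv : (Finset.univ : Finset (F ≃ₐ[Fq] F)) = {1, φ} := by
    symm
    apply Finset.eq_univ_of_card
    rw [Finset.card_insert_of_notMem (by simpa using hφne.symm), Finset.card_singleton, hcardG]
  -- trace formula
  have htrace : ∀ x : F, algebraMap Fq F (Algebra.trace Fq F x) = x + x ^ q := by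
    intro x
    rw [trace_eq_sum_automorphisms, huniv]
    rw [Finset.sum_insert (by simpa using hφne.symm), Finset.sum_singleton, hφ]
    rfl
  -- ξ ^ (q - 1) = -1
  have hkey : ξ ^ q = -ξ := by
    have h0 := htrace ξ⁻¹
    rw [htr, map_zero] at h0
    have h1 : (ξ⁻¹ : F) ^ q = -ξ⁻¹ := by linear_combination -h0
    rw [inv_pow] at h1
    have h2 : (ξ ^ q)⁻¹ = (-ξ)⁻¹ := by rw [h1, inv_neg]
    exact inv_injective h2
  have hone : ξ ^ (2 * (q - 1)) = 1 := by
    have hξq : ξ ^ (q - 1) * ξ = -ξ := by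
      rw [← pow_succ, Nat.sub_add_cancel (by omega), hkey]
    have h3' : ξ ^ (q - 1) = -1 := by
      have := mul_right_cancel₀ hξ (by rw [hξq]; ring : ξ ^ (q - 1) * ξ = -1 * ξ)
      exact this
    rw [mul_comm, pow_mul, h3', neg_one_sq]
  have hord : orderOf ξ ∣ 2 * (q - 1) := orderOf_dvd_of_pow_eq_one hone
  have hle : orderOf ξ ≤ 2 * (q - 1) := Nat.le_of_dvd (by omega) hord
  have hlt : 2 * (q - 1) < (q ^ 2 - 1) / 3 := by
    obtain ⟨m, hm⟩ := h3
    have hqq : q ^ 2 = q * q := sq q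
    have h6 : 6 * q ≤ q * q := Nat.mul_le_mul_right q (by omega)
    omega
  exact ⟨hle, hlt, by omega⟩
end

section
/- Let q be a prime power with q ≡ 1 (mod 3) and q > 3. Suppose ξ ∈ F_{q³} satisfies Tr_{F_{q³}/F_q}(ξ) = 0 and Tr_{F_{q³}/F_q}(ξ^{−1}) = 0. Then ξ^{3(q−1)} = 1; in particular ord(ξ) ≤ 3(q−1) < (q³−1)/3 for q > 2, so ξ is not 3-primitive. -/
/-- for a prime power `q ≡ 1 (mod 3)` with `q > 3`, if `ξ ∈ F_{q³}^*`
has `Tr(ξ) = 0` and `Tr(ξ⁻¹) = 0`, then `ξ^{3(q-1)} = 1`; in particular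
`ord(ξ) ≤ 3(q-1) < (q³-1)/3`, so `ξ` is not `3`-primitive. -/
theorem stmt_11 (p s q : ℕ) (hp : p.Prime) (hs : 0 < s) (hq : q = p ^ s)
    (hmod : q % 3 = 1) (hq3 : 3 < q)
    (Fq F : Type) [Field Fq] [Field F] [Fintype Fq] [Fintype F] [Algebra Fq F]
    (hcardq : Fintype.card Fq = q) (hcardF : Fintype.card F = q ^ 3)
    (ξ : F) (hξ : ξ ≠ 0)
    (htr : Algebra.trace Fq F ξ = 0) (htr' : Algebra.trace Fq F ξ⁻¹ = 0) :
    ξ ^ (3 * (q - 1)) = 1 ∧ orderOf ξ ≤ 3 * (q - 1) ∧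
      3 * (q - 1) < (q ^ 3 - 1) / 3 ∧ orderOf ξ ≠ (q ^ 3 - 1) / 3 := by
  haveI : Fact p.Prime := ⟨hp⟩
  have hq1 : 1 < q := by omega
  -- characteristic of Fq (and F) is p
  obtain ⟨n, hchar⟩ := CharP.exists Fq
  haveI := hchar
  obtain ⟨n', hn'⟩ := FiniteField.card Fq n
  have hnp : n = p := by
    have h1 : n.Prime := hn'.1
    have : n ∣ p ^ s := by
      have : n ∣ n ^ (n' : ℕ) := dvd_pow_self n n'.ne_zero
      rw [← hn'.2, hcardq, hq] at this
      exact this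
    exact (Nat.prime_dvd_prime_iff_eq h1 hp).mp (h1.dvd_of_dvd_pow this)
  haveI : CharP Fq p := hnp ▸ hchar
  haveI : CharP F p := charP_of_injective_algebraMap (algebraMap Fq F).injective p
  haveI : ExpChar F p := ExpChar.prime hp
  -- Frobenius x ↦ x^q as an Fq-algebra automorphism of F
  have hpow : ∀ x : F, (iterateFrobenius F p s) x = x ^ q := by
    intro x; rw [iterateFrobenius_def, hq]
  have hcomm : ∀ a : Fq, (iterateFrobenius F p s) (algebraMap Fq F a) = algebraMap Fq F a := by
    intro a
    rw [hpow, ← map_pow, ← hcardq, FiniteField.pow_card]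
  let φ₀ : F →ₐ[Fq] F :=
    { toRingHom := iterateFrobenius F p s, commutes' := hcomm }
  have hbij : Function.Bijective φ₀ :=
    Finite.injective_iff_bijective.mp (RingHom.injective (iterateFrobenius F p s))
  let φ : F ≃ₐ[Fq] F := AlgEquiv.ofBijective φ₀ hbij
  have hφ : ∀ x : F, φ x = x ^ q := hpow
  -- φ has order 3
  have hφ3 : φ ^ 3 = 1 := by
    ext x
    have : φ (φ (φ x)) = x := by
      rw [hφ, hφ, hφ, ← pow_mul, ← pow_mul]
      have h3 : q * (q * q) = Fintype.card F := by rw [hcardF]; ring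
      rw [h3, FiniteField.pow_card]
    simpa [pow_succ, AlgEquiv.mul_apply] using this
  have hφne : φ ≠ 1 := by
    intro h1
    haveI : DecidableEq F := Classical.decEq F
    obtain ⟨g, hg⟩ := IsCyclic.exists_generator (α := Fˣ)
    have hog : orderOf (g : F) = q ^ 3 - 1 := by
      rw [orderOf_units, orderOf_eq_card_of_forall_mem_zpowers hg,
        Nat.card_eq_fintype_card, Fintype.card_units, hcardF]
    have : (g : F) ^ q = (g : F) := by
      have := congrArg (fun ψ : F ≃ₐ[Fq] F => ψ (g : F)) h1
      simpa [hφ] using this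
    have hdvd : orderOf (g : F) ∣ q - 1 := by
      apply orderOf_dvd_of_pow_eq_one
      have hgne : (g : F) ≠ 0 := Units.ne_zero g
      have hqq : (g : F) ^ (q - 1) * (g : F) = (g : F) ^ q := by
        rw [← pow_succ]
        congr 1
        omega
      have : (g : F) ^ (q - 1) * (g : F) = 1 * (g : F) := by
        rw [hqq, this, one_mul]
      exact mul_right_cancel₀ hgne this
    rw [hog] at hdvd
    have hle := Nat.le_of_dvd (by omega) hdvd
    have hqc : q + 1 ≤ q ^ 3 := by
      calc q + 1 ≤ q * q := by nlinarith
        _ ≤ q * q * q := Nat.le_mul_of_pos_right _ (by omega)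
        _ = q ^ 3 := by ring
    omega
  have hordφ : orderOf φ = 3 := by
    have hdvd : orderOf φ ∣ 3 := orderOf_dvd_of_pow_eq_one hφ3
    rcases (Nat.dvd_prime Nat.prime_three).mp hdvd with h | h
    · exact absurd (orderOf_eq_one_iff.mp h) hφne
    · exact h
  -- the automorphism group has cardinality 3
  have hfinrank : Module.finrank Fq F = 3 := by
    have h := Module.card_eq_pow_finrank (K := Fq) (V := F)
    rw [hcardq, hcardF] at h
    exact (Nat.pow_right_injective (by omega) h.symm)
  have hcardG : Fintype.card (F ≃ₐ[Fq] F) = 3 := by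
    rw [← Nat.card_eq_fintype_card, IsGalois.card_aut_eq_finrank, hfinrank]
  -- trace formula
  have htrace : ∀ x : F, algebraMap Fq F (Algebra.trace Fq F x) = x + x ^ q + (x ^ q) ^ q := by
    intro x
    rw [trace_eq_sum_automorphisms]
    have hf : Function.Bijective (fun i : Fin 3 => φ ^ (i : ℕ)) := by
      rw [Fintype.bijective_iff_injective_and_card]
      refine ⟨?_, by simp [hcardG]⟩
      intro i j hij
      have := pow_injOn_Iio_orderOf (x := φ)
        (by simp only [Set.mem_Iio, hordφ]; exact i.isLt)
        (by simp only [Set.mem_Iio, hordφ]; exact j.isLt) hij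
      exact Fin.ext this
    rw [← Fintype.sum_bijective _ hf _ (fun σ => σ x) (fun i => rfl)]
    rw [Fin.sum_univ_three]
    simp only [Fin.val_zero, Fin.val_one, Fin.val_two, pow_zero, pow_one, pow_two,
      AlgEquiv.one_apply, AlgEquiv.mul_apply, hφ]
  -- deduce the conjugate sums vanish
  have e1 : ξ + ξ ^ q + (ξ ^ q) ^ q = 0 := by
    have := htrace ξ; rw [htr, map_zero] at this; exact this.symm
  have e1' : ξ⁻¹ + (ξ ^ q)⁻¹ + ((ξ ^ q) ^ q)⁻¹ = 0 := by
    have := htrace ξ⁻¹; rw [htr', map_zero] at this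
    simp only [← inv_pow]
    exact this.symm
  have ha : ξ ^ q ≠ 0 := pow_ne_zero _ hξ
  have hb : (ξ ^ q) ^ q ≠ 0 := pow_ne_zero _ ha
  set a := ξ ^ q with hadef
  set b := (ξ ^ q) ^ q with hbdef
  have e2 : a * b + ξ * b + ξ * a = 0 := by
    have h : (ξ⁻¹ + a⁻¹ + b⁻¹) * (ξ * a * b) = 0 := by rw [e1', zero_mul]
    have hexp : (ξ⁻¹ + a⁻¹ + b⁻¹) * (ξ * a * b) = a * b + ξ * b + ξ * a := by
      field_simp
    rw [hexp] at h
    exact h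
  -- ξ³ = ξ a b
  have key : ξ ^ 3 = ξ * a * b := by
    linear_combination ξ ^ 2 * e1 - ξ * e2
  -- c := ξ a b is fixed by Frobenius, hence c^(q-1) = 1
  set c := ξ * a * b with hcdef
  have haq : a ^ q = b := by rw [hadef, hbdef]
  have hbq : b ^ q = ξ := by
    rw [hbdef, ← pow_mul, ← pow_mul]
    have h3 : q * (q * q) = Fintype.card F := by rw [hcardF]; ring
    rw [h3, FiniteField.pow_card]
  have hcq : c ^ q = c := by
    rw [hcdef, mul_pow, mul_pow, ← hadef, haq, hbq]
    ring
  have hcne : c ≠ 0 := by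
    rw [hcdef]
    exact mul_ne_zero (mul_ne_zero hξ ha) hb
  have hc1 : c ^ (q - 1) = 1 := by
    have hstep : c ^ (q - 1) * c = 1 * c := by
      rw [← pow_succ, one_mul]
      have : q - 1 + 1 = q := by omega
      rw [this, hcq]
    exact mul_right_cancel₀ hcne hstep
  have main : ξ ^ (3 * (q - 1)) = 1 := by
    rw [mul_comm 3 (q - 1), pow_mul', key, hc1]
  -- numerics
  have hdvd3 : 3 ∣ q ^ 3 - 1 := by
    have h1 : q ^ 3 % 3 = 1 := by
      rw [Nat.pow_mod, hmod]
    have h2 : 1 ≤ q ^ 3 := Nat.one_le_pow _ _ (by omega)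
    omega
  have hq3big : 16 * q ≤ q ^ 3 := by
    have h16 : 16 ≤ q * q := by nlinarith
    calc 16 * q ≤ q * q * q := Nat.mul_le_mul_right q h16
      _ = q ^ 3 := by ring
  have hlt : 3 * (q - 1) < (q ^ 3 - 1) / 3 := by
    rw [Nat.lt_div_iff_mul_lt_of_dvd (by norm_num) hdvd3]
    have : 1 ≤ q ^ 3 := Nat.one_le_pow _ _ (by omega)
    omega
  have hord : orderOf ξ ≤ 3 * (q - 1) :=
    orderOf_le_of_pow_eq_one (by omega) main
  exact ⟨main, hord, hlt, by omega⟩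
end

section
/- Let q be an odd prime power with q ≢ 1 (mod 4), and suppose ξ ∈ F_{q⁴}^* satisfies Tr_{F_{q⁴}/F_q}(ξ) = 0 and Tr_{F_{q⁴}/F_q}(ξ^{−1}) = 0, and that the minimal polynomial of ξ has degree 4 of the form x⁴ − cx² − d with c, d ∈ F_q and ξ^{2q} ≠ ξ². Then ξ^{2(q²−1)} = 1; in particular ord(ξ) ≤ 2(q²−1) < (q⁴−1)/3 for q > 2, so ξ is not 3-primitive. -/
/-!
Put `y = ξ²`, so that `y² = c y + d`. The `q`-power Frobenius fixes `c` and `d`, so `y` and `y^q`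
are two distinct roots of `X² - cX - d` and hence `y^q + y = c`. Applying Frobenius once more gives
`y^{q²} + y^q = c`, so `y^{q²} = y`, i.e. `ξ^{2(q²-1)} = 1`.
-/

open Polynomial

namespace FiniteField

variable {K R : Type*} [Field K] [Fintype K] [CommRing R] [Algebra K R]

theorem pow_card_add_self_eq_of_sq_eq [IsDomain R] {y : R} {c d : K}
    (hy : y ^ 2 = algebraMap K R c * y + algebraMap K R d) (hne : y ^ Fintype.card K ≠ y) :
    y ^ Fintype.card K + y = algebraMap K R c := by
  have hyq := congrArg (frobeniusAlgHom K R) hy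
  simp only [map_add, map_mul, map_pow, AlgHom.commutes, coe_frobeniusAlgHom] at hyq
  have hfac : (y ^ Fintype.card K - y) * (y ^ Fintype.card K + y) =
      (y ^ Fintype.card K - y) * algebraMap K R c := by
    linear_combination hyq - hy
  exact mul_left_cancel₀ (sub_ne_zero.mpr hne) hfac

theorem pow_card_sq_sub_one_eq_one_of_sq_eq [IsDomain R] {y : R} {c d : K}
    (hy : y ^ 2 = algebraMap K R c * y + algebraMap K R d) (hne : y ^ Fintype.card K ≠ y) :
    y ^ (Fintype.card K ^ 2 - 1) = 1 := by
  have hsum := pow_card_add_self_eq_of_sq_eq hy hne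
  have hsumq := congrArg (frobeniusAlgHom K R) hsum
  simp only [map_add, map_pow, AlgHom.commutes, coe_frobeniusAlgHom, ← pow_mul] at hsumq
  have hfix : y ^ (Fintype.card K ^ 2 - 1) * y = 1 * y := by
    rw [← pow_succ, Nat.sub_add_cancel (Nat.one_le_pow _ _ Fintype.card_pos), one_mul, sq]
    linear_combination hsumq - hsum
  have hy0 : y ≠ 0 := by
    rintro rfl
    exact hne (zero_pow Fintype.card_ne_zero)
  exact mul_right_cancel₀ hy0 hfix

end FiniteField

theorem Nat.two_mul_sq_sub_one_lt_pow_four_sub_one_div_three {q : ℕ} (hq : 3 ≤ q) :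
    2 * (q ^ 2 - 1) < (q ^ 4 - 1) / 3 := by
  have h9 : 9 ≤ q ^ 2 := by nlinarith
  have h81 : 9 * q ^ 2 ≤ q ^ 4 := by nlinarith
  omega

theorem stmt_12_general (q : ℕ)
    (hodd : Odd q)
    (Fq F : Type) [Field Fq] [Field F] [Fintype Fq] [Algebra Fq F]
    (hcardq : Fintype.card Fq = q)
    (ξ : F)
    (c d : Fq)
    (hmin : minpoly Fq ξ = X ^ 4 - Polynomial.C c * X ^ 2 - Polynomial.C d)
    (hne : ξ ^ (2 * q) ≠ ξ ^ 2) :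
    ξ ^ (2 * (q ^ 2 - 1)) = 1 ∧ orderOf ξ ≤ 2 * (q ^ 2 - 1) ∧
      2 * (q ^ 2 - 1) < (q ^ 4 - 1) / 3 ∧ orderOf ξ ≠ (q ^ 4 - 1) / 3 := by
  have hq : 3 ≤ q := by
    have := hcardq ▸ Fintype.one_lt_card (α := Fq)
    obtain ⟨k, rfl⟩ := hodd
    omega
  have hsq : (ξ ^ 2) ^ 2 = algebraMap Fq F c * ξ ^ 2 + algebraMap Fq F d := by
    have := minpoly.aeval Fq ξ
    simp only [hmin, map_sub, map_pow, aeval_X, map_mul, aeval_C] at this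
    linear_combination this
  have hpow : ξ ^ (2 * (q ^ 2 - 1)) = 1 := by
    rw [pow_mul, ← hcardq]
    refine FiniteField.pow_card_sq_sub_one_eq_one_of_sq_eq hsq ?_
    rwa [hcardq, ← pow_mul]
  have hlt := Nat.two_mul_sq_sub_one_lt_pow_four_sub_one_div_three hq
  have hq2 : 1 < q ^ 2 := Nat.one_lt_pow two_ne_zero (by omega)
  have hord : orderOf ξ ≤ 2 * (q ^ 2 - 1) := orderOf_le_of_pow_eq_one (by omega) hpow
  exact ⟨hpow, hord, hlt, by omega⟩

/-- for an odd prime power `q ≢ 1 (mod 4)`, if `ξ ∈ F_{q⁴}^*` has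
`Tr(ξ) = 0`, `Tr(ξ⁻¹) = 0`, minimal polynomial of degree 4 of the form `x⁴ - cx² - d`,
and `ξ^{2q} ≠ ξ²`, then `ξ^{2(q²-1)} = 1`; hence `ord(ξ) ≤ 2(q²-1) < (q⁴-1)/3` and
`ξ` is not `3`-primitive. -/
theorem stmt_12 (p s q : ℕ) (hp : p.Prime) (hs : 0 < s) (hq : q = p ^ s)
    (hodd : Odd q) (hmod : q % 4 ≠ 1)
    (Fq F : Type) [Field Fq] [Field F] [Fintype Fq] [Fintype F] [Algebra Fq F]
    (hcardq : Fintype.card Fq = q) (hcardF : Fintype.card F = q ^ 4)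
    (ξ : F) (hξ : ξ ≠ 0)
    (htr : Algebra.trace Fq F ξ = 0) (htr' : Algebra.trace Fq F ξ⁻¹ = 0)
    (c d : Fq)
    (hmin : minpoly Fq ξ = X ^ 4 - Polynomial.C c * X ^ 2 - Polynomial.C d)
    (hdeg : (minpoly Fq ξ).natDegree = 4)
    (hne : ξ ^ (2 * q) ≠ ξ ^ 2) :
    ξ ^ (2 * (q ^ 2 - 1)) = 1 ∧ orderOf ξ ≤ 2 * (q ^ 2 - 1) ∧
      2 * (q ^ 2 - 1) < (q ^ 4 - 1) / 3 ∧ orderOf ξ ≠ (q ^ 4 - 1) / 3 :=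
  stmt_12_general q hodd Fq F hcardq ξ c d hmin hne
end

section
/- Let q be a prime power, m a natural number, and m' = gcd(m, q−1). Then the number W(x^m − 1) of squarefree monic divisors of x^m − 1 in F_q[x] satisfies W(x^m − 1) ≤ 2^{(m+m')/2}; in particular W(x^m − 1) ≤ 2^m, with equality if and only if m | q − 1. Moreover, if m ∤ q − 1 then W(x^m − 1) ≤ 2^{3m/4}. -/
open Polynomial UniqueFactorizationMonoid

section helpers
variable {Fq : Type} [Field Fq] [DecidableEq Fq]

lemma aux_sum_deg_le (f : Fq[X]) (hf : f ≠ 0) :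
    ∑ g ∈ (normalizedFactors f).toFinset, g.natDegree ≤ f.natDegree := by
  have hdvd : ∏ g ∈ (normalizedFactors f).toFinset, g ∣ f := by
    have h1 : (normalizedFactors f).toFinset.prod id ∣ (normalizedFactors f).prod :=
      Multiset.toFinset_prod_dvd_prod _
    simpa using h1.trans (prod_normalizedFactors hf).dvd
  have h0 : ∀ g ∈ (normalizedFactors f).toFinset, g ≠ 0 := fun g hg =>
    (prime_of_normalized_factor g (Multiset.mem_toFinset.mp hg)).ne_zero
  calc ∑ g ∈ (normalizedFactors f).toFinset, g.natDegree
      = (∏ g ∈ (normalizedFactors f).toFinset, g).natDegree :=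
        (natDegree_prod _ _ h0).symm
    _ ≤ f.natDegree := natDegree_le_of_dvd hdvd hf

lemma aux_pr [Fintype Fq] (m : ℕ) (hm : 0 < m) (hdvd : m ∣ Fintype.card Fq - 1) :
    ∃ ζ : Fq, IsPrimitiveRoot ζ m := by
  obtain ⟨g, hg⟩ := IsCyclic.exists_ofOrder_eq_natCard (α := Fqˣ)
  have hcard : Nat.card Fqˣ = Fintype.card Fq - 1 := by
    rw [Nat.card_eq_fintype_card, Fintype.card_units]
  rw [hcard] at hg
  have h0 : orderOf g ≠ 0 := by
    rw [hg]
    have : 1 < Fintype.card Fq := Fintype.one_lt_card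
    omega
  have horder : orderOf (g ^ (orderOf g / m)) = m :=
    orderOf_pow_orderOf_div h0 (hg ▸ hdvd)
  refine ⟨((g ^ (orderOf g / m) : Fqˣ) : Fq), ?_⟩
  have hpr := IsPrimitiveRoot.orderOf (g ^ (orderOf g / m))
  rw [horder] at hpr
  exact IsPrimitiveRoot.coe_units_iff.mpr hpr

lemma aux_mem_nf {f : Fq[X]} (hf : f ≠ 0) {a : Fq} (ha : f.IsRoot a) :
    X - C a ∈ (normalizedFactors f).toFinset := by
  obtain ⟨g, hg, hassoc⟩ := exists_mem_normalizedFactors_of_dvd hf (irreducible_X_sub_C a)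
      (dvd_iff_isRoot.mpr ha)
  have heq : normalize (X - C a) = normalize g :=
    normalize_eq_normalize hassoc.dvd hassoc.symm.dvd
  rw [(monic_X_sub_C a).normalize_eq_self, normalize_normalized_factor g hg] at heq
  rw [Multiset.mem_toFinset, heq]
  exact hg

lemma aux_monic {f g : Fq[X]} (hg : g ∈ (normalizedFactors f).toFinset) : g.Monic := by
  have hg' := Multiset.mem_toFinset.mp hg
  have hne := (prime_of_normalized_factor g hg').ne_zero
  have hn := normalize_normalized_factor g hg'
  rw [← hn]
  exact monic_normalize hne

end helpers

/-- with `m' = gcd(m, q-1)` and `t` the number of distinct monic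
irreducible factors of `x^m - 1` over `F_q` (so `W(x^m - 1) = 2^t`):
`2^t ≤ 2^{(m+m')/2}`, `2^t ≤ 2^m` with equality iff `m ∣ q - 1`, and if `m ∤ q - 1`
then `2^t ≤ 2^{3m/4}`. -/
theorem stmt_17 (p s q m : ℕ) (hp : p.Prime) (hs : 0 < s) (hq : q = p ^ s)
    (hm : 0 < m)
    (Fq : Type) [Field Fq] [Fintype Fq] [DecidableEq Fq]
    (hcardq : Fintype.card Fq = q) :
    ((2 : ℝ) ^ ((UniqueFactorizationMonoid.normalizedFactors
          (X ^ m - 1 : Polynomial Fq)).toFinset.card : ℕ) ≤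
        (2 : ℝ) ^ (((m : ℝ) + (Nat.gcd m (q - 1) : ℝ)) / 2)) ∧
    (2 ^ ((UniqueFactorizationMonoid.normalizedFactors
          (X ^ m - 1 : Polynomial Fq)).toFinset.card) ≤ 2 ^ m) ∧
    (2 ^ ((UniqueFactorizationMonoid.normalizedFactors
          (X ^ m - 1 : Polynomial Fq)).toFinset.card) = 2 ^ m ↔ m ∣ q - 1) ∧
    (¬ m ∣ q - 1 →
      (2 : ℝ) ^ ((UniqueFactorizationMonoid.normalizedFactors
          (X ^ m - 1 : Polynomial Fq)).toFinset.card : ℕ) ≤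
        (2 : ℝ) ^ ((3 * (m : ℝ)) / 4)) := by
  have hq2 : 2 ≤ q := by
    rw [hq]
    exact Nat.one_lt_pow hs.ne' hp.one_lt
  set f : Fq[X] := X ^ m - 1 with hf
  have hfC : f = X ^ m - C 1 := by rw [C_1]
  have hfdeg : f.natDegree = m := by rw [hfC]; exact natDegree_X_pow_sub_C
  have hf0 : f ≠ 0 := by
    intro h
    rw [h, natDegree_zero] at hfdeg
    omega
  set S := (normalizedFactors f).toFinset with hS
  set t := S.card with ht
  set m' := Nat.gcd m (q - 1) with hm'
  have hm'pos : 0 < m' := Nat.gcd_pos_of_pos_left _ hm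
  have hm'dvd : m' ∣ m := Nat.gcd_dvd_left _ _
  have hm'le : m' ≤ m := Nat.le_of_dvd hm hm'dvd
  -- roots of f satisfy a^{m'} = 1
  have hroot : ∀ a : Fq, f.IsRoot a → a ^ m' = 1 := by
    intro a ha
    have ham : a ^ m = 1 := by
      have : a ^ m - 1 = 0 := by simpa [hf, IsRoot] using ha
      linear_combination this
    have ha0 : a ≠ 0 := by
      intro h
      rw [h, zero_pow hm.ne'] at ham
      exact zero_ne_one ham
    have haq : a ^ (q - 1) = 1 := by
      rw [← hcardq]
      exact FiniteField.pow_card_sub_one_eq_one a ha0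
    have hdvd : orderOf a ∣ m' :=
      Nat.dvd_gcd (orderOf_dvd_of_pow_eq_one ham) (orderOf_dvd_of_pow_eq_one haq)
    exact orderOf_dvd_iff_pow_eq_one.mp hdvd
  -- basic facts about factors
  have hdeg1 : ∀ g ∈ S, 1 ≤ g.natDegree := by
    intro g hg
    exact (prime_of_normalized_factor g (Multiset.mem_toFinset.mp hg)).irreducible.natDegree_pos
  have hsumle : ∑ g ∈ S, g.natDegree ≤ m := hfdeg ▸ aux_sum_deg_le f hf0
  -- number of linear factors is at most m'
  set L := S.filter (fun g => g.natDegree = 1) with hL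
  have hLdesc : ∀ g ∈ L, g = X - C (-(g.coeff 0)) := by
    intro g hg
    obtain ⟨hgS, hgdeg⟩ := Finset.mem_filter.mp hg
    have := (aux_monic hgS).eq_X_add_C hgdeg
    rw [map_neg, sub_neg_eq_add]
    exact this
  have hLcard : L.card ≤ m' := by
    have hg2 : (X ^ m' - 1 : Fq[X]) = X ^ m' - C 1 := by rw [C_1]
    have hgdeg : (X ^ m' - 1 : Fq[X]).natDegree = m' := by rw [hg2]; exact natDegree_X_pow_sub_C
    have hgne : (X ^ m' - 1 : Fq[X]) ≠ 0 := by
      intro h; rw [h, natDegree_zero] at hgdeg; omega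
    have hcard2 : (X ^ m' - 1 : Fq[X]).roots.toFinset.card ≤ m' := by
      calc (X ^ m' - 1 : Fq[X]).roots.toFinset.card
          ≤ Multiset.card (X ^ m' - 1 : Fq[X]).roots := Multiset.toFinset_card_le _
        _ ≤ (X ^ m' - 1 : Fq[X]).natDegree := card_roots' _
        _ = m' := hgdeg
    refine le_trans (Finset.card_le_card_of_injOn (fun g => -(g.coeff 0)) ?_ ?_) hcard2
    · intro g hg
      obtain ⟨hgS, _⟩ := Finset.mem_filter.mp hg
      have hgdvd : g ∣ f := dvd_of_mem_normalizedFactors (Multiset.mem_toFinset.mp hgS)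
      have hroot_a : f.IsRoot (-(g.coeff 0)) := by
        rw [← dvd_iff_isRoot, ← hLdesc g hg]
        exact hgdvd
      have := hroot _ hroot_a
      rw [Finset.mem_coe, Multiset.mem_toFinset, mem_roots hgne]
      simp [IsRoot, this]
    · intro g hg g' hg' hgg
      simp only at hgg
      rw [hLdesc g hg, hLdesc g' hg', hgg]
  -- the central counting inequality
  have h2t : 2 * t ≤ m + m' := by
    have hsplit : L.card + (S.filter (fun g => ¬ g.natDegree = 1)).card = t :=
      Finset.card_filter_add_card_filter_not _
    have hNsum : (S.filter (fun g => ¬ g.natDegree = 1)).card * 2 ≤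
        ∑ g ∈ S.filter (fun g => ¬ g.natDegree = 1), g.natDegree := by
      have := Finset.card_nsmul_le_sum (S.filter (fun g => ¬ g.natDegree = 1))
        (fun g => g.natDegree) 2 (fun g hg => by
          show 2 ≤ g.natDegree
          obtain ⟨hgS, hgdeg⟩ := Finset.mem_filter.mp hg
          have := hdeg1 g hgS
          omega)
      simpa [smul_eq_mul] using this
    have hLsum : L.card * 1 ≤ ∑ g ∈ L, g.natDegree := by
      have := Finset.card_nsmul_le_sum L (fun g => g.natDegree) 1
        (fun g hg => hdeg1 g (Finset.mem_filter.mp hg).1)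
      simpa [smul_eq_mul] using this
    have htot : ∑ g ∈ L, g.natDegree +
        ∑ g ∈ S.filter (fun g => ¬ g.natDegree = 1), g.natDegree = ∑ g ∈ S, g.natDegree :=
      Finset.sum_filter_add_sum_filter_not S _ _
    omega
  have htm : t ≤ m := by
    have : t ≤ ∑ g ∈ S, g.natDegree := by
      calc t = ∑ _g ∈ S, 1 := by simp [ht]
        _ ≤ ∑ g ∈ S, g.natDegree := Finset.sum_le_sum hdeg1
    omega
  -- equality characterization
  have hiff : t = m ↔ m ∣ q - 1 := by
    constructor
    · intro htt
      have hmm' : m ≤ m' := by omega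
      have : m' = m := le_antisymm hm'le hmm'
      rw [← this]
      exact Nat.gcd_dvd_right m (q - 1)
    · intro hdvd
      obtain ⟨ζ, hζ⟩ := aux_pr (Fq := Fq) m hm (by rw [hcardq]; exact hdvd)
      have hcardroots : (nthRootsFinset m (1 : Fq)).card = m := hζ.card_nthRootsFinset
      have hmt : m ≤ t := by
        rw [← hcardroots]
        apply Finset.card_le_card_of_injOn (fun a => X - C a)
        · intro a ha
          rw [Finset.mem_coe]
          apply aux_mem_nf hf0
          have ham : a ^ m = 1 := (mem_nthRootsFinset hm 1).mp ha
          simp [hf, IsRoot, ham]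
        · intro a _ b _ hab
          have := congrArg (fun g : Fq[X] => g.coeff 0) hab
          simpa using this
      omega
  refine ⟨?_, ?_, ?_, ?_⟩
  · have hreal : (t : ℝ) ≤ ((m : ℝ) + (m' : ℝ)) / 2 := by
      have h2t' : (2 * t : ℝ) ≤ ((m : ℝ) + (m' : ℝ)) := by exact_mod_cast h2t
      linarith
    rw [← Real.rpow_natCast (2 : ℝ) t]
    exact Real.rpow_le_rpow_of_exponent_le one_le_two hreal
  · exact Nat.pow_le_pow_right (by norm_num) htm
  · constructor
    · intro h
      exact hiff.mp (Nat.pow_right_injective (le_refl 2) h)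
    · intro h
      rw [hiff.mpr h]
  · intro hndvd
    have hm'ne : m' ≠ m := by
      intro h
      exact hndvd (h ▸ Nat.gcd_dvd_right m (q - 1))
    have h2m' : 2 * m' ≤ m := by
      obtain ⟨k, hk⟩ := hm'dvd
      have hk2 : 2 ≤ k := by
        rcases Nat.lt_or_ge k 2 with h | h
        · interval_cases k <;> omega
        · exact h
      have := Nat.mul_le_mul_left m' hk2
      omega
    have hreal2 : (t : ℝ) ≤ 3 * (m : ℝ) / 4 := by
      have h4t : (4 * t : ℝ) ≤ 3 * (m : ℝ) := by
        have : 4 * t ≤ 3 * m := by omega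
        exact_mod_cast this
      linarith
    rw [← Real.rpow_natCast (2 : ℝ) t]
    exact Real.rpow_le_rpow_of_exponent_le one_le_two hreal2
end

section
/- Let q ≥ 2 be a prime power with 3 | q − 1 and let ξ be a 3-primitive element of F_{q³} over F_q with Tr_{F_{q³}/F_q}(ξ^{−1}) = 0 and Tr_{F_{q³}/F_q}(ξ) = 0. Then q ≤ 2, i.e., no such ξ exists for q > 2. -/
private lemma pow_eq_self_aux {F : Type} [Field F] {x : F} (hx : x ≠ 0) {n : ℕ}
    (hn : 1 ≤ n) (h : x ^ n = x) : x ^ (n - 1) = 1 := by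
  have h2 : x ^ (n - 1) * x = 1 * x := by
    rw [one_mul, ← pow_succ, Nat.sub_add_cancel hn, h]
  exact mul_right_cancel₀ hx h2

/-- for a prime power `q` with `3 ∣ q - 1`, if `ξ` is a `3`-primitive
element of `F_{q³}` with `Tr(ξ⁻¹) = 0` and `Tr(ξ) = 0`, then `q ≤ 2`. -/
theorem stmt_18 (p s q : ℕ) (hp : p.Prime) (hs : 0 < s) (hq : q = p ^ s)
    (h3 : 3 ∣ q - 1)
    (Fq F : Type) [Field Fq] [Field F] [Fintype Fq] [Fintype F] [Algebra Fq F]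
    (hcardq : Fintype.card Fq = q) (hcardF : Fintype.card F = q ^ 3)
    (ξ : F) (hξ : ξ ≠ 0) (hord : orderOf ξ = (q ^ 3 - 1) / 3)
    (htr' : Algebra.trace Fq F ξ⁻¹ = 0) (htr : Algebra.trace Fq F ξ = 0) :
    q ≤ 2 := by
  classical
  have hq2 : 2 ≤ q := hq ▸ Nat.one_lt_pow hs.ne' hp.one_lt
  have hq4 : 4 ≤ q := by omega
  -- q - 1 divides q^3 - 1, so 3 divides q^3 - 1
  have hdvd1 : q - 1 ∣ q ^ 3 - 1 := by
    simpa using Nat.sub_dvd_pow_sub_pow q 1 3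
  have h3d : 3 ∣ q ^ 3 - 1 := h3.trans hdvd1
  -- the characteristic of F is p
  have hcharF : CharP F p := by
    obtain ⟨n, hn⟩ := FiniteField.card F (ringChar F)
    have hprime : (ringChar F).Prime := CharP.char_is_prime F (ringChar F)
    have : ringChar F ^ (n : ℕ) = p ^ (s * 3) := by
      rw [← hn.2, hcardF, hq, ← pow_mul]
    have hpr : p = ringChar F := by
      have hd : p ∣ ringChar F ^ (n : ℕ) := by
        rw [this]; exact dvd_pow_self p (by positivity)
      have := hp.dvd_of_dvd_pow hd
      exact ((Nat.prime_dvd_prime_iff_eq hp hprime).mp this)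
    rw [hpr]; exact ringChar.charP F
  -- the Frobenius x ↦ x^q as an Fq-algebra automorphism of F
  have hfrob_add : ∀ x y : F, (x + y) ^ q = x ^ q + y ^ q := by
    intro x y
    haveI := hcharF
    haveI : Fact p.Prime := ⟨hp⟩
    rw [hq]
    exact add_pow_char_pow x y p s
  let fr : F →ₐ[Fq] F :=
    { toFun := fun x => x ^ q
      map_one' := one_pow q
      map_mul' := fun x y => mul_pow x y q
      map_zero' := zero_pow (by omega)
      map_add' := hfrob_add
      commutes' := fun a => by
        show (algebraMap Fq F a) ^ q = algebraMap Fq F a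
        rw [← map_pow]
        congr 1
        have := FiniteField.pow_card a
        rwa [hcardq] at this }
  have hbij : Function.Bijective fr :=
    (Finite.injective_iff_bijective).mp (fr.toRingHom.injective)
  let φ : F ≃ₐ[Fq] F := AlgEquiv.ofBijective fr hbij
  have hφ : ∀ x : F, φ x = x ^ q := fun x => rfl
  have hφsq : ∀ x : F, (φ ^ 2) x = x ^ (q * q) := by
    intro x
    rw [pow_two, AlgEquiv.mul_apply, hφ, hφ, ← pow_mul]
  -- finrank and automorphism count
  have hfin : Module.finrank Fq F = 3 := by
    have hc := Module.card_eq_pow_finrank (K := Fq) (V := F)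
    rw [hcardq, hcardF] at hc
    exact (Nat.pow_right_injective hq2 hc.symm)
  have hcardAut : Fintype.card (F ≃ₐ[Fq] F) = 3 := by
    rw [← Nat.card_eq_fintype_card, IsGalois.card_aut_eq_finrank, hfin]
  -- a key divisibility-to-inequality step
  have key : ∀ m : ℕ, 0 < m → orderOf ξ ∣ m → q ^ 3 - 1 ≤ 3 * m := by
    intro m hm hdvd
    rw [hord] at hdvd
    have h1 : (q ^ 3 - 1) / 3 ≤ m := Nat.le_of_dvd hm hdvd
    omega
  have h16 : 16 * q ≤ q ^ 3 := by
    calc 16 * q = 4 * 4 * q := by ring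
    _ ≤ q * q * q := Nat.mul_le_mul (Nat.mul_le_mul hq4 hq4) le_rfl
    _ = q ^ 3 := by ring
  have hA : 4 * (q * q) ≤ q ^ 3 := by
    calc 4 * (q * q) ≤ q * (q * q) := Nat.mul_le_mul hq4 le_rfl
    _ = q ^ 3 := by ring
  have hB : 16 ≤ q * q := Nat.mul_le_mul hq4 hq4
  have hqq1 : 1 < q * q := lt_of_lt_of_le (by norm_num) hB
  obtain ⟨r, hr⟩ : ∃ r, q ^ 3 = r := ⟨_, rfl⟩
  obtain ⟨c, hc⟩ : ∃ c, q * q = c := ⟨_, rfl⟩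
  -- distinctness of 1, φ, φ²
  have h1φ : (1 : F ≃ₐ[Fq] F) ≠ φ := by
    intro h
    have hx : ξ ^ q = ξ := by rw [← hφ ξ, ← h, AlgEquiv.one_apply]
    have hpow := pow_eq_self_aux hξ (by omega) hx
    have hle := key (q - 1) (by omega) (orderOf_dvd_of_pow_eq_one hpow)
    rw [hr] at hle h16
    omega
  have h1φ2 : (1 : F ≃ₐ[Fq] F) ≠ φ ^ 2 := by
    intro h
    have hx : ξ ^ (q * q) = ξ := by rw [← hφsq ξ, ← h, AlgEquiv.one_apply]
    have hpow := pow_eq_self_aux hξ hqq1.le hx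
    have hle := key (q * q - 1) (Nat.sub_pos_of_lt hqq1) (orderOf_dvd_of_pow_eq_one hpow)
    rw [hr] at hle hA
    rw [hc] at hle hA hB
    omega
  have hφφ2 : φ ≠ φ ^ 2 := by
    intro h
    apply h1φ
    have : φ * 1 = φ * φ := by rw [mul_one, ← pow_two, ← h]
    exact mul_left_cancel this
  -- the sum over automorphisms is the Frobenius power sum
  have huniv : (Finset.univ : Finset (F ≃ₐ[Fq] F)) = {1, φ, φ ^ 2} := by
    symm
    apply Finset.eq_univ_of_card
    rw [Finset.card_insert_of_notMem (by simp [h1φ, h1φ2]),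
      Finset.card_insert_of_notMem (by simp [hφφ2]), Finset.card_singleton, hcardAut]
  have htrace : ∀ x : F, algebraMap Fq F (Algebra.trace Fq F x) = x + x ^ q + x ^ (q * q) := by
    intro x
    rw [trace_eq_sum_automorphisms, huniv,
      Finset.sum_insert (by simp [h1φ, h1φ2]),
      Finset.sum_insert (by simp [hφφ2]), Finset.sum_singleton,
      AlgEquiv.one_apply, hφ, hφsq, add_assoc]
  -- the two trace conditions
  have h1 : ξ + ξ ^ q + ξ ^ (q * q) = 0 := by
    have := htrace ξ
    rw [htr, map_zero] at this
    exact this.symm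
  have h2 : ξ⁻¹ + (ξ ^ q)⁻¹ + (ξ ^ (q * q))⁻¹ = 0 := by
    have := htrace ξ⁻¹
    rw [htr', map_zero, inv_pow, inv_pow] at this
    exact this.symm
  have ha : ξ ^ q ≠ 0 := pow_ne_zero _ hξ
  have hb : ξ ^ (q * q) ≠ 0 := pow_ne_zero _ hξ
  have he2 : ξ * (ξ ^ q) + ξ * (ξ ^ (q * q)) + (ξ ^ q) * (ξ ^ (q * q)) = 0 := by
    field_simp at h2
    linear_combination h2
  have hx3 : ξ ^ 3 = ξ * (ξ ^ q) * (ξ ^ (q * q)) := by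
    linear_combination ξ ^ 2 * h1 - ξ * he2
  -- conclude: ξ^(3(q-1)) = 1
  have hone : ξ ^ (q ^ 3 - 1) = 1 := by
    have := FiniteField.pow_card_sub_one_eq_one ξ hξ
    rwa [hcardF] at this
  have hxab : ξ * (ξ ^ q) * (ξ ^ (q * q)) = ξ ^ (1 + q + q * q) := by
    rw [pow_add, pow_add, pow_one]
  have hexp : (1 + q + q * q) * (q - 1) = q ^ 3 - 1 := by
    have h1q : 1 ≤ q := by omega
    have h1q3 : 1 ≤ q ^ 3 := Nat.one_le_pow _ _ (by omega)
    zify [h1q, h1q3]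
    ring
  have hkey : ξ ^ (3 * (q - 1)) = 1 := by
    rw [pow_mul, hx3, hxab, ← pow_mul, hexp, hone]
  have hle := key (3 * (q - 1)) (by omega) (orderOf_dvd_of_pow_eq_one hkey)
  rw [hr] at hle h16
  omega
end

section
/- Let F be a finite field of order q^m, λ a nontrivial additive character of F, and g ∈ F_q[x] a divisor of x^m − 1 of degree k acting on F by g ∘ β = Σ aᵢβ^{qⁱ}. For additive characters λ, Ω of F, define g ∘ Ω by (g ∘ Ω)(β) = Ω(g ∘ β). Then (1/q^m) Σ_{β ∈ F} λ(β) Ω(g ∘ β)^{−1} equals 1 if λ = g ∘ Ω and 0 otherwise. Moreover, for a fixed additive character λ, the set {Ω : λ = g ∘ Ω} has exactly q^k elements if Ord_q(λ) divides (x^m − 1)/g, and is empty otherwise. -/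
/-!
Write `L f` for the additive map `ξ ↦ f ∘ ξ`; it is `f` evaluated at the `q`-Frobenius of `F`, so
`L (g * g') = L g ∘ L g'`, and `L (x^m - 1) = 0` because `x^m - 1` is the minimal polynomial of
Frobenius. Counting roots of the linearized polynomial `Σ aᵢ X^{qⁱ}` bounds `|ker L f|` by
`q^{deg f}`; since `q^{deg g} q^{deg g'} = |F|`, the sequence `F → F → F` given by `L g'`, `L g` is
exact and `|ker L g| = q^k`.

The first claim is orthogonality of the characters `λ` and `Ω ∘ L g`. Summing it over all `Ω`
and swapping the sums, `Σ_Ω Ω(-(g ∘ β))` is `|F|` or `0` according as `g ∘ β = 0`, so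
`|F| · #{Ω : λ = g ∘ Ω} = |F| · Σ_{β ∈ ker L g} λ(β)`, which is `|F| q^k` if `λ` is trivial on
`ker L g = im L g'` and `0` otherwise.
-/

open scoped Classical

open Polynomial

namespace AddChar

variable {G H : Type*} [AddCommGroup G] [AddCommGroup H] [Fintype G]

lemma sum_mul_inv_comp_eq_ite (φ : G →+ H) (ψ : AddChar G ℂ) (Ω : AddChar H ℂ) :
    ∑ x, ψ x * (Ω (φ x))⁻¹ = if ∀ x, ψ x = Ω (φ x) then (Fintype.card G : ℂ) else 0 := by
  simp only [← compAddMonoidHom_apply Ω φ, ← inv_apply', ← mul_apply, sum_eq_ite]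
  simp only [show (0 : AddChar G ℂ) = 1 from rfl, mul_inv_eq_one]
  simp only [DFunLike.ext_iff, compAddMonoidHom_apply]

lemma card_fiber_compAddMonoidHom_mul_card [Fintype H] (φ : G →+ H) (ψ : AddChar G ℂ) :
    Nat.card {Ω : AddChar H ℂ // ∀ x, ψ x = Ω (φ x)} * Fintype.card G =
      if ∀ x ∈ φ.ker, ψ x = 1 then Fintype.card H * Nat.card φ.ker else 0 := by
  have hsum_ker :
      ∑ x : φ.ker, ψ x = if ∀ x ∈ φ.ker, ψ x = 1 then (Nat.card φ.ker : ℂ) else 0 := by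
    simpa [Nat.card_eq_fintype_card, show (0 : AddChar φ.ker ℂ) = 1 from rfl, eq_one_iff]
      using sum_eq_ite (ψ.compAddMonoidHom φ.ker.subtype)
  apply Nat.cast_injective (R := ℂ)
  push_cast
  calc (Nat.card {Ω : AddChar H ℂ // ∀ x, ψ x = Ω (φ x)} : ℂ) * Fintype.card G
      = ∑ Ω : AddChar H ℂ, ∑ x, ψ x * (Ω (φ x))⁻¹ := by
        simp only [sum_mul_inv_comp_eq_ite, Finset.sum_ite, Finset.sum_const_zero, add_zero,
          Finset.sum_const, nsmul_eq_mul, Nat.card_eq_fintype_card, Fintype.card_subtype]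
    _ = ∑ x, ψ x * ∑ Ω : AddChar H ℂ, Ω (-φ x) := by
        rw [Finset.sum_comm]
        simp_rw [map_neg_eq_inv, Finset.mul_sum]
    _ = Fintype.card H * ∑ x : φ.ker, ψ x := by
        simp_rw [sum_apply_eq_ite, neg_eq_zero, mul_ite, mul_zero, ← Finset.sum_filter,
          ← Finset.sum_mul, mul_comm _ (Fintype.card H : ℂ)]
        congr 1
        exact Finset.sum_subtype _ (by simp) _
    _ = _ := by rw [hsum_ker]; split_ifs <;> simp
end AddChar

lemma AddMonoidHom.ker_eq_range_of_comp_eq_zero {G H K : Type*} [AddGroup G] [AddGroup H]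
    [AddGroup K] [Finite G] [Finite H] {ψ : G →+ H} {φ : H →+ K} (h : φ.comp ψ = 0)
    (hcard : Nat.card φ.ker * Nat.card ψ.ker ≤ Nat.card G) : φ.ker = ψ.range := by
  have hle : ψ.range ≤ φ.ker := by
    rintro _ ⟨x, rfl⟩
    exact DFunLike.congr_fun h x
  have hG : Nat.card ψ.range * Nat.card ψ.ker = Nat.card G := by
    rw [← AddSubgroup.index_ker ψ, mul_comm, AddSubgroup.card_mul_index]
  refine (AddSubgroup.eq_of_le_of_card_ge hle ?_).symm
  exact Nat.le_of_mul_le_mul_right (hcard.trans hG.ge) Nat.card_pos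

section Linearized

variable {Fq F : Type} [Field Fq] [Field F] [Algebra Fq F]

noncomputable def linearizedPoly (q : ℕ) (f : Fq[X]) : F[X] :=
  f.sum fun i a => C (algebraMap Fq F a) * X ^ q ^ i

lemma eval_linearizedPoly (q : ℕ) (f : Fq[X]) (ξ : F) :
    (linearizedPoly q f).eval ξ = polyAct q f ξ := by
  simp [linearizedPoly, polyAct, Polynomial.sum_def, eval_finsetSum]

lemma coeff_linearizedPoly_pow {q : ℕ} (hq : 1 < q) (f : Fq[X]) (i : ℕ) :
    (linearizedPoly q f : F[X]).coeff (q ^ i) = algebraMap Fq F (f.coeff i) := by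
  rw [linearizedPoly, Polynomial.sum_def, finsetSum_coeff]
  simp_rw [coeff_C_mul_X_pow, (Nat.pow_right_injective hq).eq_iff]
  simp +contextual

lemma natDegree_linearizedPoly_le {q : ℕ} (hq : 0 < q) (f : Fq[X]) :
    (linearizedPoly q f : F[X]).natDegree ≤ q ^ f.natDegree := by
  refine natDegree_sum_le_of_forall_le _ _ fun i hi => natDegree_C_mul_X_pow_le _ _ |>.trans ?_
  exact Nat.pow_le_pow_right hq (le_natDegree_of_mem_supp i hi)

lemma card_polyAct_eq_zero_le [Fintype F] {q : ℕ} (hq : 1 < q) {f : Fq[X]} (hf : f ≠ 0) :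
    Nat.card {ξ : F // polyAct q f ξ = 0} ≤ q ^ f.natDegree := by
  have hP : (linearizedPoly q f : F[X]) ≠ 0 := fun h => by
    simpa [h, hf] using (coeff_linearizedPoly_pow (F := F) hq f f.natDegree).symm
  rw [Nat.card_eq_fintype_card, Fintype.card_subtype]
  refine (card_le_degree_of_subset_roots fun ξ hξ => ?_).trans
    (natDegree_linearizedPoly_le (by omega) f)
  simpa [mem_roots hP, eval_linearizedPoly] using hξ

end Linearized

section Frobenius

variable (Fq F : Type) [Field Fq] [Fintype Fq] [Field F] [Algebra Fq F]

noncomputable def linearizedHom (f : Fq[X]) : F →+ F :=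
  (aeval (FiniteField.frobeniusAlgHom Fq F).toLinearMap f).toAddMonoidHom

variable {Fq F}

lemma linearizedHom_apply (f : Fq[X]) (ξ : F) :
    linearizedHom Fq F f ξ = polyAct (Fintype.card Fq) f ξ := by
  simp [linearizedHom, aeval_def, eval₂_eq_sum, polyAct, Polynomial.sum_def, Module.End.pow_apply,
    FiniteField.coe_frobeniusAlgHom, pow_iterate, Algebra.smul_def]

lemma linearizedHom_mul (f g : Fq[X]) :
    linearizedHom Fq F (f * g) = (linearizedHom Fq F f).comp (linearizedHom Fq F g) := by
  ext; simp [linearizedHom]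

lemma linearizedHom_X_pow_sub_one [Fintype F] {m : ℕ}
    (hF : Fintype.card F = Fintype.card Fq ^ m) :
    linearizedHom Fq F (X ^ m - 1) = 0 := by
  have hm : Module.finrank Fq F = m :=
    Nat.pow_right_injective (Fintype.one_lt_card (α := Fq))
      (Module.card_eq_pow_finrank.symm.trans hF)
  ext ξ
  simp [linearizedHom, ← hm, ← FiniteField.minpoly_frobeniusAlgHom]

lemma card_ker_linearizedHom_le [Fintype F] {f : Fq[X]} (hf : f ≠ 0) :
    Nat.card (linearizedHom Fq F f).ker ≤ Fintype.card Fq ^ f.natDegree := by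
  rw [Nat.card_congr (Equiv.subtypeEquivRight fun ξ => by
    rw [AddMonoidHom.mem_ker, linearizedHom_apply])]
  exact card_polyAct_eq_zero_le Fintype.one_lt_card hf

lemma ker_linearizedHom_eq_range_and_card [Fintype F] {m : ℕ} (hm : 0 < m)
    (hF : Fintype.card F = Fintype.card Fq ^ m) {g g' : Fq[X]} (hfac : g * g' = X ^ m - 1) :
    (linearizedHom Fq F g).ker = (linearizedHom Fq F g').range ∧
      Nat.card (linearizedHom Fq F g).ker = Fintype.card Fq ^ g.natDegree := by
  obtain ⟨hg, hg'⟩ : g ≠ 0 ∧ g' ≠ 0 := mul_ne_zero_iff.mp <| by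
    simpa [hfac] using X_pow_sub_C_ne_zero hm (1 : Fq)
  have hdeg : g.natDegree + g'.natDegree = m := by
    rw [← natDegree_mul hg hg', hfac, ← C_1, natDegree_X_pow_sub_C]
  have hcard : Nat.card F = Fintype.card Fq ^ g.natDegree * Fintype.card Fq ^ g'.natDegree := by
    rw [← pow_add, hdeg, Nat.card_eq_fintype_card, hF]
  have hle := card_ker_linearizedHom_le (F := F) hg
  have hle' := card_ker_linearizedHom_le (F := F) hg'
  have hcomp : (linearizedHom Fq F g).comp (linearizedHom Fq F g') = 0 := by
    rw [← linearizedHom_mul, hfac, linearizedHom_X_pow_sub_one hF]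
  have hker := AddMonoidHom.ker_eq_range_of_comp_eq_zero hcomp (hcard ▸ Nat.mul_le_mul hle hle')
  refine ⟨hker, ?_⟩
  have hexact := AddSubgroup.card_mul_index (linearizedHom Fq F g').ker
  rw [AddSubgroup.index_ker, ← hker, hcard] at hexact
  have hpos : 0 < Nat.card (linearizedHom Fq F g').ker := Nat.card_pos
  -- both kernel bounds must be attained, as their product is attained
  nlinarith

end Frobenius

theorem stmt_19_general (q m k : ℕ)
    (hm : 0 < m)
    (Fq F : Type) [Field Fq] [Field F] [Fintype Fq] [Fintype F] [Algebra Fq F]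
    (hcardq : Fintype.card Fq = q) (hcardF : Fintype.card F = q ^ m)
    (g g' : Polynomial Fq) (hgdeg : g.natDegree = k)
    (hfactor : g * g' = Polynomial.X ^ m - 1)
    (lam Om : AddChar F ℂ) :
    ((∑ β : F, lam β * (Om (polyAct q g β))⁻¹) =
      if ∀ β : F, lam β = Om (polyAct q g β) then ((q : ℂ) ^ m) else 0) ∧
    (Nat.card {Om' : AddChar F ℂ // ∀ β : F, lam β = Om' (polyAct q g β)} =
      if ∀ β : F, lam (polyAct q g' β) = 1 then q ^ k else 0) := by
  subst hcardq hgdeg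
  simp only [← linearizedHom_apply (F := F) g, ← linearizedHom_apply (F := F) g']
  obtain ⟨hker, hcard⟩ := ker_linearizedHom_eq_range_and_card hm hcardF hfactor
  refine ⟨by simpa [hcardF] using AddChar.sum_mul_inv_comp_eq_ite (linearizedHom Fq F g) lam Om,
    ?_⟩
  have hcond : (∀ x ∈ (linearizedHom Fq F g).ker, lam x = 1) ↔
      ∀ β, lam (linearizedHom Fq F g' β) = 1 := by
    simp [hker]
  have hcount := AddChar.card_fiber_compAddMonoidHom_mul_card (linearizedHom Fq F g) lam
  simp only [hcond, hcard] at hcount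
  refine Nat.eq_of_mul_eq_mul_right Fintype.card_pos (hcount.trans ?_)
  split_ifs <;> ring

/-- for additive characters `λ, Ω` of `F = F_{q^m}` (with `λ` nontrivial)
and `g ∣ x^m - 1` of degree `k`: `(1/q^m)·Σ_β λ(β)·Ω(g∘β)⁻¹` is `1` if `λ = g ∘ Ω` and
`0` otherwise; and the number of `Ω` with `λ = g ∘ Ω` is `q^k` if `Ord_q(λ)` divides
`(x^m - 1)/g` (i.e. `λ ∘ ((x^m-1)/g)` is trivial) and `0` otherwise. -/
theorem stmt_19 (p s q m k : ℕ) (hp : p.Prime) (hs : 0 < s) (hq : q = p ^ s)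
    (hm : 0 < m)
    (Fq F : Type) [Field Fq] [Field F] [Fintype Fq] [Fintype F] [Algebra Fq F]
    (hcardq : Fintype.card Fq = q) (hcardF : Fintype.card F = q ^ m)
    (g g' : Polynomial Fq) (hgdeg : g.natDegree = k)
    (hfactor : g * g' = Polynomial.X ^ m - 1)
    (lam Om : AddChar F ℂ) (hlam : lam ≠ 1) :
    ((∑ β : F, lam β * (Om (polyAct q g β))⁻¹) =
      if ∀ β : F, lam β = Om (polyAct q g β) then ((q : ℂ) ^ m) else 0) ∧
    (Nat.card {Om' : AddChar F ℂ // ∀ β : F, lam β = Om' (polyAct q g β)} =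
      if ∀ β : F, lam (polyAct q g' β) = 1 then q ^ k else 0) :=
  stmt_19_general q m k hm Fq F hcardq hcardF g g' hgdeg hfactor lam Om
end
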